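/- arXiv:1307.4308 — 11 statements merged into one kernel-verified Lean document; each statement's English description precedes it below -/
import Mathlib

section
/- There is a constant K > 0 such that for all integers p, q with 0 < q < p, | ln C(p,q) − q·(ln(p/q) + 1 − S(q/p)) − (1/2)·ln( p / (2π·q·(p−q)) ) | ≤ K / min(q, p−q). -/
open Real

/-- `S x = ∑_{j ≥ 1} x^j / (j (j+1))`. -/
noncomputable def S (x : ℝ) : ℝ := ∑' j : ℕ, x ^ (j + 1) / ((j + 1) * (j + 2))

/-!
Splitting `1 / (j (j + 1)) = 1 / j - 1 / (j + 1)` and summing the logarithmic series gives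
`S x = 1 + (1 - x) / x * log (1 - x)`. With this closed form the whole approximation term is exactly
the Stirling approximation of `log (p! / (q! (p - q)!))`, so the error equals `r p - r q - r (p - q)`,
where `r n = log n! - (n log n - n + log (2 π n) / 2)` is the Stirling remainder. Robbins' bound
`r n - r (n + 1) ≤ 1 / (12 n (n + 1))` together with `r n → 0` gives `0 ≤ r n ≤ 1 / (12 n)`,
so the error is at most `1 / (6 min q (p - q))` in absolute value.
-/

open Filter Topology Stirling

lemma S_eq_one_add_mul_log {x : ℝ} (hx0 : 0 < x) (hx1 : x < 1) :
    S x = 1 + (1 - x) / x * log (1 - x) := by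
  have hlog : HasSum (fun n : ℕ => x ^ (n + 1) / (n + 1)) (-log (1 - x)) :=
    hasSum_pow_div_log_of_abs_lt_one (by rwa [abs_of_pos hx0])
  have hshift : HasSum (fun n : ℕ => x ^ (n + 1) / (n + 2)) ((-log (1 - x) - x) / x) := by
    have h := ((hasSum_nat_add_iff' 1).mpr hlog).div_const x
    simp only [Finset.range_one, Finset.sum_singleton, zero_add, pow_one, Nat.cast_zero,
      div_one] at h
    refine h.congr_fun fun n => ?_
    push_cast
    field_simp
    ring
  have hsplit : (fun n : ℕ => x ^ (n + 1) / ((n + 1) * (n + 2)))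
      = fun n : ℕ => x ^ (n + 1) / (n + 1) - x ^ (n + 1) / (n + 2) := by
    funext n
    field_simp
    ring
  rw [S, hsplit, (hlog.sub hshift).tsum_eq]
  field_simp
  ring

noncomputable def stirlingRemainder (n : ℕ) : ℝ := log (stirlingSeq n) - log √π

lemma tendsto_stirlingRemainder : Tendsto stirlingRemainder atTop (𝓝 0) := by
  have := (tendsto_stirlingSeq_sqrt_pi.log (sqrt_pos.mpr pi_pos).ne').sub_const (log √π)
  rwa [sub_self] at this

lemma stirlingRemainder_nonneg {n : ℕ} (hn : n ≠ 0) : 0 ≤ stirlingRemainder n :=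
  sub_nonneg.mpr (log_le_log (sqrt_pos.mpr pi_pos) (sqrt_pi_le_stirlingSeq hn))

lemma stirlingRemainder_sub_succ_le (n : ℕ) :
    stirlingRemainder n - stirlingRemainder (n + 1) ≤ 1 / (12 * n * (n + 1)) := by
  simpa [stirlingRemainder] using log_stirlingSeq_sdiff_le n

lemma stirlingRemainder_le {n : ℕ} (hn : n ≠ 0) : stirlingRemainder n ≤ 1 / (12 * n) := by
  obtain ⟨n, rfl⟩ := Nat.exists_eq_add_one_of_ne_zero hn
  set f : ℕ → ℝ := fun k => stirlingRemainder (k + 1) - 1 / (12 * (k + 1)) with hf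
  have hmono : Monotone f := monotone_nat_of_le_succ fun k => by
    have h := stirlingRemainder_sub_succ_le (k + 1)
    have hstep : 1 / (12 * ((k : ℝ) + 1)) - 1 / (12 * ((k : ℝ) + 1 + 1))
        = 1 / (12 * ((k : ℝ) + 1) * ((k : ℝ) + 1 + 1)) := by
      field_simp
      ring
    simp only [hf]
    push_cast at h ⊢
    linarith
  have hlim : Tendsto f atTop (𝓝 0) := by
    have h1 := tendsto_stirlingRemainder.comp (tendsto_add_atTop_nat 1)
    have h2 := (tendsto_one_div_add_atTop_nhds_zero_nat (𝕜 := ℝ)).div_const 12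
    rw [zero_div] at h2
    convert h1.sub h2 using 2 with k
    · simp only [hf, Function.comp]
      field_simp
    · simp
  have hfn := hmono.ge_of_tendsto hlim n
  simp only [hf] at hfn
  push_cast
  linarith

lemma log_factorial_eq_add_stirlingRemainder {n : ℕ} (hn : n ≠ 0) :
    log n.factorial = n * log n - n + log n / 2 + log (2 * π) / 2 + stirlingRemainder n := by
  have hn0 : (0 : ℝ) < n := by positivity
  rw [stirlingRemainder, log_stirlingSeq_formula, log_mul two_ne_zero hn0.ne',
    log_div hn0.ne' (exp_ne_zero 1), log_exp, log_mul two_ne_zero pi_ne_zero, log_sqrt pi_pos.le]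
  ring

lemma log_choose_sub_stirling_approx_eq {p q : ℕ} (hq : 0 < q) (hqp : q < p) :
    log (p.choose q) - q * (log (p / q) + 1 - S (q / p)) - 1 / 2 * log (p / (2 * π * q * (p - q)))
      = stirlingRemainder p - stirlingRemainder q - stirlingRemainder (p - q) := by
  have hp : (0 : ℝ) < p := by exact_mod_cast hq.trans hqp
  have hq' : (0 : ℝ) < q := by exact_mod_cast hq
  have hd : (0 : ℝ) < (p - q : ℕ) := by exact_mod_cast Nat.sub_pos_of_lt hqp
  have hcast : ((p - q : ℕ) : ℝ) = p - q := Nat.cast_sub hqp.le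
  have hx1 : (q : ℝ) / p < 1 := (div_lt_one hp).mpr (by exact_mod_cast hqp)
  have hchoose : log (p.choose q) = log p.factorial - log q.factorial - log (p - q).factorial := by
    rw [Nat.cast_choose ℝ hqp.le, log_div (by positivity) (by positivity),
      log_mul (by positivity) (by positivity)]
    ring
  have h1x : 1 - (q : ℝ) / p = (p - q : ℕ) / p := by
    rw [hcast]
    field_simp
  rw [hchoose, log_factorial_eq_add_stirlingRemainder (by omega),
    log_factorial_eq_add_stirlingRemainder hq.ne', log_factorial_eq_add_stirlingRemainder (by omega),
    S_eq_one_add_mul_log (by positivity) hx1, h1x, log_div hd.ne' hp.ne', log_div hp.ne' hq'.ne',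
    ← hcast, log_div hp.ne' (by positivity), log_mul (by positivity) hd.ne',
    log_mul (by positivity) hq'.ne', log_mul (by positivity) pi_ne_zero]
  field_simp
  rw [hcast]
  ring

lemma abs_stirlingRemainder_add_sub_sub_le {a b : ℕ} (ha : a ≠ 0) (hb : b ≠ 0) :
    |stirlingRemainder (a + b) - stirlingRemainder a - stirlingRemainder b|
      ≤ 1 / 6 / (min a b : ℕ) := by
  have bound {n : ℕ} (hn : min a b ≤ n) : stirlingRemainder n ≤ 1 / (12 * (min a b : ℕ)) :=
    (stirlingRemainder_le (by omega)).trans (by gcongr)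
  have hab_le := bound ((min_le_left a b).trans (a.le_add_right b))
  have ha_le := bound (min_le_left a b)
  have hb_le := bound (min_le_right a b)
  have hab_nonneg := stirlingRemainder_nonneg (n := a + b) (by omega)
  have ha_nonneg := stirlingRemainder_nonneg ha
  have hb_nonneg := stirlingRemainder_nonneg hb
  have hK : 1 / 6 / ((min a b : ℕ) : ℝ) = 2 * (1 / (12 * (min a b : ℕ))) := by ring
  rw [abs_le]
  constructor <;> linarith

theorem stmt_0 :
    ∃ K : ℝ, 0 < K ∧ ∀ p q : ℕ, 0 < q → q < p →
      |Real.log (p.choose q) -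
          (q : ℝ) * (Real.log ((p : ℝ) / q) + 1 - S ((q : ℝ) / p)) -
          (1 / 2) * Real.log ((p : ℝ) / (2 * Real.pi * q * (p - q)))| ≤
        K / (min q (p - q) : ℕ) := by
  refine ⟨1 / 6, by norm_num, fun p q hq hqp => ?_⟩
  rw [log_choose_sub_stirling_approx_eq hq hqp]
  have h := abs_stirlingRemainder_add_sub_sub_le hq.ne' (Nat.sub_pos_of_lt hqp).ne'
  rwa [Nat.add_sub_cancel' hqp.le] at h
end

section
/- There is a constant K > 0 such that for all positive integers p, q, r with 1 ≤ r ≤ p+q−1 and (p+q) dividing r·p, one has | ln C(p+q, r) − ln C(p, r·p/(p+q)) − ln C(q, r·q/(p+q)) | ≤ K·ln(p+q). -/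
/-!
By Vandermonde, `C(p+q, r) = ∑_{i+j=r} C(p,i) C(q,j)`, a sum of `r + 1` terms. For
`a = rp/(p+q)` and `b = rq/(p+q)` we have `aq = bp`, and comparing the ratio
`(p-i)(j+1) / ((i+1)(q-j))` of consecutive terms with `1` shows that `C(p,a) C(q,b)` is the
largest term (the mode of the hypergeometric distribution). Hence
`C(p,a) C(q,b) ≤ C(p+q, r) ≤ (r+1) C(p,a) C(q,b)`, and the claim holds with `K = 1`.
-/

open Finset

theorem Real.abs_log_sub_log_le_log {x y m : ℝ} (hx : 0 < x) (hxy : x ≤ y) (hym : y ≤ m * x) :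
    |Real.log y - Real.log x| ≤ Real.log m := by
  have hm : 0 < m := pos_of_mul_pos_left (hx.trans_le (hxy.trans hym)) hx.le
  rw [abs_of_nonneg (sub_nonneg.mpr (Real.log_le_log hx hxy)), sub_le_iff_le_add,
    ← Real.log_mul hm.ne' hx.ne']
  exact Real.log_le_log (hx.trans_le hxy) hym

namespace Nat

theorem choose_mul_choose_succ_le_of_mul_le {p q i j : ℕ}
    (h : (i + 1) * (q - j) ≤ (p - i) * (j + 1)) :
    p.choose i * q.choose (j + 1) ≤ p.choose (i + 1) * q.choose j := by
  refine Nat.le_of_mul_le_mul_right ?_ (Nat.mul_pos i.succ_pos j.succ_pos)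
  calc p.choose i * q.choose (j + 1) * ((i + 1) * (j + 1))
      = p.choose i * q.choose j * ((i + 1) * (q - j)) := by
        linear_combination (p.choose i * (i + 1)) * q.choose_succ_right_eq j
    _ ≤ p.choose i * q.choose j * ((p - i) * (j + 1)) := Nat.mul_le_mul_left _ h
    _ = p.choose (i + 1) * q.choose j * ((i + 1) * (j + 1)) := by
        linear_combination (q.choose j * (j + 1)) * (p.choose_succ_right_eq i).symm

section Balanced

variable {p q a b : ℕ}

theorem mul_sub_eq_sub_mul_of_mul_eq (hab : a * q = b * p) (ha : a ≤ p) (hb : b ≤ q) :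
    a * (q - b) = (p - a) * b := by
  zify [ha, hb] at hab ⊢
  linear_combination hab

theorem choose_mul_choose_le_of_le_left (hab : a * q = b * p) (ha : a ≤ p) (hb : b ≤ q)
    {i : ℕ} (hi : i ≤ a) :
    p.choose i * q.choose (a + b - i) ≤ p.choose a * q.choose b := by
  induction hi using Nat.decreasingInduction with
  | self => rw [Nat.add_sub_cancel_left]
  | of_succ k hk ih =>
    have hstep : (k + 1) * (q - (a + b - (k + 1))) ≤ (p - k) * (a + b - (k + 1) + 1) :=
      calc (k + 1) * (q - (a + b - (k + 1))) ≤ a * (q - b) := Nat.mul_le_mul (by omega) (by omega)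
        _ = (p - a) * b := mul_sub_eq_sub_mul_of_mul_eq hab ha hb
        _ ≤ (p - k) * (a + b - (k + 1) + 1) := Nat.mul_le_mul (by omega) (by omega)
    have := choose_mul_choose_succ_le_of_mul_le hstep
    rw [show a + b - (k + 1) + 1 = a + b - k by omega] at this
    exact this.trans ih

theorem choose_mul_choose_le_of_add_eq (hab : a * q = b * p) (ha : a ≤ p) (hb : b ≤ q)
    {i j : ℕ} (hij : i + j = a + b) :
    p.choose i * q.choose j ≤ p.choose a * q.choose b := by
  rcases le_total i a with hi | hj
  · obtain rfl : j = a + b - i := by omega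
    exact choose_mul_choose_le_of_le_left hab ha hb hi
  · obtain rfl : i = b + a - j := by omega
    rw [mul_comm, mul_comm (p.choose a)]
    exact choose_mul_choose_le_of_le_left hab.symm hb ha (by omega)

theorem choose_mul_choose_le_choose_add : p.choose a * q.choose b ≤ (p + q).choose (a + b) := by
  rw [add_choose_eq]
  exact single_le_sum (f := fun ij : ℕ × ℕ => p.choose ij.1 * q.choose ij.2)
    (a := (a, b)) (fun _ _ => Nat.zero_le _) (mem_antidiagonal.mpr rfl)

theorem choose_add_le_mul_choose_mul_choose (hab : a * q = b * p) (ha : a ≤ p) (hb : b ≤ q) :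
    (p + q).choose (a + b) ≤ (a + b + 1) * (p.choose a * q.choose b) := by
  rw [add_choose_eq, ← Nat.card_antidiagonal, ← smul_eq_mul]
  exact sum_le_card_nsmul _ _ _ fun ij hij =>
    choose_mul_choose_le_of_add_eq hab ha hb (mem_antidiagonal.mp hij)

theorem abs_log_choose_add_sub_le (hab : a * q = b * p) (ha : a ≤ p) (hb : b ≤ q) :
    |Real.log ((p + q).choose (a + b)) - Real.log (p.choose a) - Real.log (q.choose b)| ≤
      Real.log (a + b + 1) := by
  have hpa : (0 : ℝ) < p.choose a := by exact_mod_cast choose_pos ha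
  have hqb : (0 : ℝ) < q.choose b := by exact_mod_cast choose_pos hb
  rw [sub_sub, ← Real.log_mul hpa.ne' hqb.ne']
  exact Real.abs_log_sub_log_le_log (mul_pos hpa hqb)
    (by exact_mod_cast choose_mul_choose_le_choose_add)
    (by exact_mod_cast choose_add_le_mul_choose_mul_choose hab ha hb)

end Balanced

end Nat

theorem stmt_2 :
    ∃ K : ℝ, 0 < K ∧ ∀ p q r : ℕ, 0 < p → 0 < q → 1 ≤ r → r ≤ p + q - 1 →
      (p + q) ∣ r * p →
      |Real.log ((p + q).choose r) - Real.log (p.choose (r * p / (p + q))) -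
          Real.log (q.choose (r * q / (p + q)))| ≤ K * Real.log (p + q) := by
  refine ⟨1, one_pos, fun p q r _ _ hr hrpq hdvd => ?_⟩
  have hpq : 0 < p + q := by omega
  set a := r * p / (p + q)
  set b := r * q / (p + q)
  have ha : a * (p + q) = r * p := Nat.div_mul_cancel hdvd
  have hb : b * (p + q) = r * q := Nat.div_mul_cancel <|
    (Nat.dvd_add_right hdvd).mp (by rw [← mul_add]; exact dvd_mul_left _ _)
  have hab : a + b = r := Nat.eq_of_mul_eq_mul_right hpq (by rw [add_mul, ha, hb, mul_add])
  have hbal : a * q = b * p := Nat.eq_of_mul_eq_mul_right hpq <| by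
    rw [mul_right_comm, ha, mul_right_comm b, hb, mul_right_comm]
  have hap : a ≤ p := Nat.le_of_mul_le_mul_right (by rw [ha, mul_comm]; gcongr; omega) hpq
  have hbq : b ≤ q := Nat.le_of_mul_le_mul_right (by rw [hb, mul_comm]; gcongr; omega) hpq
  calc _ ≤ Real.log (a + b + 1) := hab ▸ Nat.abs_log_choose_add_sub_le hbal hap hbq
    _ ≤ 1 * Real.log (p + q) := by
      rw [one_mul]
      exact Real.log_le_log (by positivity) (by exact_mod_cast (by omega : a + b + 1 ≤ p + q))
end

section
/- For all integers n, m, l with m ≥ 1, l ≥ 1 and l + m ≤ n, one has C(n−m, l) ≤ C(n, l)·e^{−l·m/n}. -/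
/-!
For `a ≤ b` the ratio `a.descFactorial l / b.descFactorial l` is a product of `l` factors
`(a - i) / (b - i)`, each at most `a / b`. Hence `C(n - m, l) ≤ C(n, l) (1 - m/n)^l`, and
`1 - m/n ≤ e^{-m/n}` finishes the proof.
-/

theorem Nat.sub_mul_le_sub_mul_of_le {a b : ℕ} (hab : a ≤ b) (l : ℕ) :
    (a - l) * b ≤ (b - l) * a := by
  rw [Nat.sub_mul, Nat.sub_mul, mul_comm b a]
  exact Nat.sub_le_sub_left (Nat.mul_le_mul_left l hab) _

theorem Nat.descFactorial_mul_pow_le_of_le {a b : ℕ} (hab : a ≤ b) (l : ℕ) :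
    a.descFactorial l * b ^ l ≤ b.descFactorial l * a ^ l := by
  induction l with
  | zero => simp
  | succ l ih =>
    rw [Nat.descFactorial_succ, Nat.descFactorial_succ, pow_succ, pow_succ]
    calc (a - l) * a.descFactorial l * (b ^ l * b)
        = ((a - l) * b) * (a.descFactorial l * b ^ l) := by ring
      _ ≤ ((b - l) * a) * (b.descFactorial l * a ^ l) :=
        Nat.mul_le_mul (Nat.sub_mul_le_sub_mul_of_le hab l) ih
      _ = (b - l) * b.descFactorial l * (a ^ l * a) := by ring

theorem Nat.choose_mul_pow_le_of_le {a b : ℕ} (hab : a ≤ b) (l : ℕ) :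
    a.choose l * b ^ l ≤ b.choose l * a ^ l := by
  have h := Nat.descFactorial_mul_pow_le_of_le hab l
  rw [Nat.descFactorial_eq_factorial_mul_choose, Nat.descFactorial_eq_factorial_mul_choose,
    mul_assoc, mul_assoc] at h
  exact Nat.le_of_mul_le_mul_left h l.factorial_pos

theorem Nat.choose_sub_le_choose_mul_one_sub_div_pow {n m : ℕ} (hmn : m ≤ n) (l : ℕ) :
    ((n - m).choose l : ℝ) ≤ n.choose l * (1 - (m : ℝ) / n) ^ l := by
  rcases n.eq_zero_or_pos with rfl | hn
  · simp [Nat.le_zero.mp hmn]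
  have hkey : ((n - m).choose l : ℝ) * (n : ℝ) ^ l ≤ n.choose l * ((n : ℝ) - m) ^ l := by
    exact_mod_cast Nat.choose_mul_pow_le_of_le (Nat.sub_le n m) l
  have hnR : (0 : ℝ) < n := by exact_mod_cast hn
  rwa [one_sub_div hnR.ne', div_pow, ← mul_div_assoc, le_div_iff₀ (by positivity)]

theorem stmt_3_general (n m l : ℕ) (hlmn : l + m ≤ n) :
    ((n - m).choose l : ℝ) ≤ (n.choose l : ℝ) * Real.exp (-((l : ℝ) * m / n)) := by
  have hmn : m ≤ n := by omega
  have hbase : 0 ≤ 1 - (m : ℝ) / n :=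
    sub_nonneg.mpr (div_le_one_of_le₀ (by exact_mod_cast hmn) n.cast_nonneg)
  calc ((n - m).choose l : ℝ) ≤ n.choose l * (1 - (m : ℝ) / n) ^ l :=
        Nat.choose_sub_le_choose_mul_one_sub_div_pow hmn l
    _ ≤ n.choose l * Real.exp (-((m : ℝ) / n)) ^ l := by
        gcongr
        exact Real.one_sub_le_exp_neg _
    _ = n.choose l * Real.exp (-((l : ℝ) * m / n)) := by
        rw [← Real.exp_nat_mul]
        ring_nf

theorem stmt_3 (n m l : ℕ) (hm : 1 ≤ m) (hl : 1 ≤ l) (hlmn : l + m ≤ n) :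
    ((n - m).choose l : ℝ) ≤ (n.choose l : ℝ) * Real.exp (-((l : ℝ) * m / n)) :=
  stmt_3_general n m l hlmn
end

section
/- There is a constant K > 0 such that for all integers l, m, j with 1 ≤ j ≤ m and m² ≤ l, one has ln( C(l−m, m−j)·C(m, j) ) ≤ ln C(l, m) − j·ln( j·l/m² ) + j + ln j + K. -/
/-!
Writing `x = j l / m²`, the claim says `C(l-m, m-j) C(m,j) x^j ≤ e^j C(l,m)` up to the
nonnegative `log j + K`. Split `x^j = (l/m)^j (j/m)^j`. Peeling one element at a time,
`C(l-j, m-j) l^j ≤ C(l,m) m^j`, and `C(l-m, m-j) ≤ C(l-j, m-j)`; on the other side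
`C(m,j) ≤ m^j / j!` and `j^j / j! ≤ e^j`.
-/

namespace Nat

theorem choose_mul_le_succ_choose_succ_mul {n k a b : ℕ} (h : (k + 1) * a ≤ (n + 1) * b) :
    n.choose k * a ≤ (n + 1).choose (k + 1) * b := by
  refine Nat.le_of_mul_le_mul_left ?_ n.succ_pos
  calc (n + 1) * (n.choose k * a) = (n + 1).choose (k + 1) * ((k + 1) * a) := by
        rw [← mul_assoc, add_one_mul_choose_eq]; ring
    _ ≤ (n + 1).choose (k + 1) * ((n + 1) * b) := Nat.mul_le_mul_left _ h
    _ = (n + 1) * ((n + 1).choose (k + 1) * b) := by ring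

theorem choose_mul_add_pow_le {n k : ℕ} (hkn : k ≤ n) (j : ℕ) :
    n.choose k * (n + j) ^ j ≤ (n + j).choose (k + j) * (k + j) ^ j := by
  induction j generalizing n k with
  | zero => simp
  | succ j ih =>
    have step : n.choose k * (n + (j + 1)) ≤ (n + 1).choose (k + 1) * (k + (j + 1)) :=
      choose_mul_le_succ_choose_succ_mul (by nlinarith)
    have ih' := ih (Nat.succ_le_succ hkn)
    rw [show n + 1 + j = n + (j + 1) by ring, show k + 1 + j = k + (j + 1) by ring] at ih'
    calc n.choose k * (n + (j + 1)) ^ (j + 1)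
        = n.choose k * (n + (j + 1)) * (n + (j + 1)) ^ j := by ring
      _ ≤ (n + 1).choose (k + 1) * (k + (j + 1)) * (n + (j + 1)) ^ j :=
        Nat.mul_le_mul_right _ step
      _ = (n + 1).choose (k + 1) * (n + (j + 1)) ^ j * (k + (j + 1)) := by ring
      _ ≤ (n + (j + 1)).choose (k + (j + 1)) * (k + (j + 1)) ^ j * (k + (j + 1)) :=
        Nat.mul_le_mul_right _ ih'
      _ = (n + (j + 1)).choose (k + (j + 1)) * (k + (j + 1)) ^ (j + 1) := by ring

theorem choose_sub_mul_pow_le {l m j : ℕ} (hjm : j ≤ m) (hml : m ≤ l) :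
    (l - j).choose (m - j) * l ^ j ≤ l.choose m * m ^ j := by
  have h := choose_mul_add_pow_le (n := l - j) (k := m - j) (by omega) j
  rwa [Nat.sub_add_cancel (hjm.trans hml), Nat.sub_add_cancel hjm] at h

theorem choose_mul_pow_le_pow_mul_exp (m j : ℕ) :
    (m.choose j : ℝ) * (j : ℝ) ^ j ≤ (m : ℝ) ^ j * Real.exp j := by
  calc (m.choose j : ℝ) * (j : ℝ) ^ j ≤ (m : ℝ) ^ j / j ! * (j : ℝ) ^ j := by
        gcongr; exact choose_le_pow_div j m
    _ = (m : ℝ) ^ j * ((j : ℝ) ^ j / j !) := by ring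
    _ ≤ (m : ℝ) ^ j * Real.exp j := by
        gcongr; exact Real.pow_div_factorial_le_exp _ j.cast_nonneg j

theorem choose_mul_choose_mul_pow_le {l m j : ℕ} (hjm : j ≤ m) (hml : m ≤ l) :
    ((l - m).choose (m - j) : ℝ) * m.choose j * ((j : ℝ) * l / (m : ℝ) ^ 2) ^ j ≤
      l.choose m * Real.exp j := by
  rcases Nat.eq_zero_or_pos m with rfl | hm
  · obtain rfl : j = 0 := Nat.le_zero.mp hjm
    simp
  have hm' : (0 : ℝ) < m := by exact_mod_cast hm
  have hA : ((l - m).choose (m - j) : ℝ) * (l : ℝ) ^ j ≤ l.choose m * (m : ℝ) ^ j := by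
    exact_mod_cast (Nat.mul_le_mul_right _ (Nat.choose_le_choose _ (by omega))).trans
      (choose_sub_mul_pow_le hjm hml)
  have hB : (m.choose j : ℝ) * (j : ℝ) ^ j / (m : ℝ) ^ j ≤ Real.exp j := by
    rw [div_le_iff₀ (by positivity), mul_comm (Real.exp _)]
    exact choose_mul_pow_le_pow_mul_exp m j
  calc ((l - m).choose (m - j) : ℝ) * m.choose j * ((j : ℝ) * l / (m : ℝ) ^ 2) ^ j
      = (((l - m).choose (m - j) : ℝ) * (l : ℝ) ^ j / (m : ℝ) ^ j) *
          ((m.choose j : ℝ) * (j : ℝ) ^ j / (m : ℝ) ^ j) := by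
        rw [div_pow, ← pow_mul, mul_comm 2 j, pow_mul, mul_pow]
        field_simp
    _ ≤ l.choose m * Real.exp j := by
        gcongr
        rwa [div_le_iff₀ (by positivity)]

end Nat

theorem stmt_5 :
    ∃ K : ℝ, 0 < K ∧ ∀ l m j : ℕ, 1 ≤ j → j ≤ m → m ^ 2 ≤ l →
      Real.log (((l - m).choose (m - j) : ℝ) * (m.choose j : ℝ)) ≤
        Real.log (l.choose m) - (j : ℝ) * Real.log ((j : ℝ) * l / (m : ℝ) ^ 2)
          + j + Real.log j + K := by
  refine ⟨1, one_pos, fun l m j hj hjm hml => ?_⟩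
  have hm : 0 < m := hj.trans hjm
  have hm_le_l : m ≤ l := (Nat.le_self_pow two_ne_zero m).trans hml
  -- `2m ≤ m² + 1 ≤ l + j` keeps the first binomial coefficient nonzero
  have hA : 0 < (l - m).choose (m - j) := by
    have : 2 * m ≤ m ^ 2 + 1 := by nlinarith
    exact Nat.choose_pos (by omega)
  have hB : 0 < m.choose j := Nat.choose_pos hjm
  have hx : (0 : ℝ) < (j : ℝ) * l / (m : ℝ) ^ 2 := by
    have : 0 < l := hm.trans_le hm_le_l
    positivity
  have key := Real.log_le_log (by positivity) (Nat.choose_mul_choose_mul_pow_le hjm hm_le_l)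
  rw [Real.log_mul (by positivity) (pow_pos hx j).ne', Real.log_pow,
    Real.log_mul (by exact_mod_cast (Nat.choose_pos hm_le_l).ne') (Real.exp_pos _).ne',
    Real.log_exp] at key
  have hlogj : 0 ≤ Real.log j := Real.log_nonneg (by exact_mod_cast hj)
  linarith
end

section
/- Let n, m, l be natural numbers with m ≤ l ≤ n and let U be a family of m-element subsets of [n]. Then |Ext(U, l)| · C(n, m) ≥ |U| · C(n, l); that is, the l-extension of U is at least as dense among l-subsets of [n] as U is among m-subsets. -/
/-! Double counting the pairs `s ⊆ t` with `s ∈ U` and `t` an `l`-subset of the ground set: each `s`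
lies in exactly `C(n - m, l - m)` such `t`, all of them in the extension, while each `t` in the
extension contains at most `C(l, m)` members of `U`. Hence
`|U| · C(n - m, l - m) ≤ |Ext(U, l)| · C(l, m)`, and the identity
`C(n, l) · C(l, m) = C(n, m) · C(n - m, l - m)` turns this into the claim. -/

/-- The `l`-extension of a family `U` inside the space `[n] = {1, …, n}`:
all `l`-element subsets of `[n]` containing some member of `U`. -/
def extFam (n : ℕ) (U : Finset (Finset ℕ)) (l : ℕ) : Finset (Finset ℕ) :=
  ((Finset.Icc 1 n).powersetCard l).filter (fun t => ∃ s ∈ U, s ⊆ t)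

open Finset

namespace Finset

variable {α : Type*} [DecidableEq α] {S : Finset α} {U : Finset (Finset α)} {m l : ℕ}

lemma bipartiteAbove_extension_eq {s : Finset α} (hs : s ∈ U) :
    ((S.powersetCard l).filter (fun t => ∃ s ∈ U, s ⊆ t)).bipartiteAbove (· ⊆ ·) s =
      (S.powersetCard l).filter (s ⊆ ·) := by
  ext t
  simp only [mem_bipartiteAbove, mem_filter]
  exact ⟨fun ⟨⟨ht, _⟩, hst⟩ => ⟨ht, hst⟩, fun ⟨ht, hst⟩ => ⟨⟨ht, s, hs, hst⟩, hst⟩⟩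

lemma card_bipartiteAbove_extension (hU : U ⊆ S.powersetCard m) (hml : m ≤ l) {s : Finset α}
    (hs : s ∈ U) :
    #(((S.powersetCard l).filter (fun t => ∃ s ∈ U, s ⊆ t)).bipartiteAbove (· ⊆ ·) s) =
      (#S - m).choose (l - m) := by
  obtain ⟨hsS, hsm⟩ := mem_powersetCard.1 (hU hs)
  rw [bipartiteAbove_extension_eq hs, card_filter_powersetCard_subset s S l hsS (hsm ▸ hml),
    hsm]

lemma card_bipartiteBelow_subset_le (hU : U ⊆ S.powersetCard m) {t : Finset α} :
    #(U.bipartiteBelow (· ⊆ ·) t) ≤ (#t).choose m := by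
  rw [← card_powersetCard]
  refine card_le_card fun s hs => ?_
  rw [mem_bipartiteBelow] at hs
  exact mem_powersetCard.2 ⟨hs.2, (mem_powersetCard.1 (hU hs.1)).2⟩

theorem card_mul_choose_le_card_extension_mul_choose (hU : U ⊆ S.powersetCard m) (hml : m ≤ l) :
    #U * (#S).choose l ≤
      #((S.powersetCard l).filter (fun t => ∃ s ∈ U, s ⊆ t)) * (#S).choose m := by
  set E := (S.powersetCard l).filter (fun t => ∃ s ∈ U, s ⊆ t)
  have double_count : #U * (#S - m).choose (l - m) ≤ #E * l.choose m :=
    card_mul_le_card_mul (· ⊆ ·) (fun s hs => (card_bipartiteAbove_extension hU hml hs).ge)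
      fun t ht => (mem_powersetCard.1 (mem_filter.1 ht).1).2 ▸ card_bipartiteBelow_subset_le hU
  refine Nat.le_of_mul_le_mul_right ?_ (Nat.choose_pos hml)
  calc #U * (#S).choose l * l.choose m
      = #U * (#S - m).choose (l - m) * (#S).choose m := by
        rw [mul_assoc, Nat.choose_mul hml]; ring
    _ ≤ #E * l.choose m * (#S).choose m := Nat.mul_le_mul_right _ double_count
    _ = #E * (#S).choose m * l.choose m := by ring

end Finset

theorem stmt_6_general (n m l : ℕ) (hml : m ≤ l)
    (U : Finset (Finset ℕ)) (hU : U ⊆ (Finset.Icc 1 n).powersetCard m) :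
    (extFam n U l).card * n.choose m ≥ U.card * n.choose l := by
  simpa [extFam] using card_mul_choose_le_card_extension_mul_choose hU hml

theorem stmt_6 (n m l : ℕ) (hml : m ≤ l) (hln : l ≤ n)
    (U : Finset (Finset ℕ)) (hU : U ⊆ (Finset.Icc 1 n).powersetCard m) :
    (extFam n U l).card * n.choose m ≥ U.card * n.choose l :=
  stmt_6_general n m l hml U hU
end

section
/- Let n, m, l be natural numbers with m ≤ l ≤ n, let U be a family of m-element subsets of [n], and let D = {(t, t', d) : t ∈ U, t' ∈ U, d ⊆ [n], |d| = l, t ∪ t' ⊆ d} be the set of double marks. Then |Ext(U, l)| · |D| ≥ ( |U| · C(n−m, l−m) )². -/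
/-- The set of double marks `(t, t', d)` with `t, t' ∈ U`, `d` an `l`-subset
of `[n]` and `t ∪ t' ⊆ d`. -/
def doubleMarks (n : ℕ) (U : Finset (Finset ℕ)) (l : ℕ) :
    Finset (Finset ℕ × Finset ℕ × Finset ℕ) :=
  (U ×ˢ U ×ˢ (Finset.Icc 1 n).powersetCard l).filter
    (fun x => x.1 ∪ x.2.1 ⊆ x.2.2)

/-! Let `f d` be the number of members of `U` inside an `l`-set `d`. Summing `f` over all
`l`-subsets of `[n]` counts the marks, `|U| · C(n-m, l-m)`; summing `f²` counts the double marks;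
and `f` vanishes off `Ext(U, l)`. Cauchy–Schwarz over the support of `f` gives the claim. -/

open Finset

theorem sq_sum_le_card_filter_ne_zero_mul_sum_sq {ι : Type*} (s : Finset ι) (f : ι → ℕ) :
    (∑ i ∈ s, f i) ^ 2 ≤ #{i ∈ s | f i ≠ 0} * ∑ i ∈ s, f i ^ 2 := by
  rw [← sum_filter_ne_zero,
    ← sum_filter_of_ne (f := fun i ↦ f i ^ 2) fun i _ h ↦ ne_zero_pow two_ne_zero h]
  exact sq_sum_le_card_mul_sum_sq

theorem sum_card_filter_subset_eq_card_mul {α : Type*} [DecidableEq α] {U P : Finset (Finset α)} {k : ℕ}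
    (hk : ∀ t ∈ U, #{d ∈ P | t ⊆ d} = k) :
    ∑ d ∈ P, #{t ∈ U | t ⊆ d} = #U * k := by
  have := sum_card_bipartiteAbove_eq_sum_card_bipartiteBelow (s := U) (t := P) (· ⊆ ·)
  simp only [bipartiteAbove, bipartiteBelow] at this
  rw [← this, sum_congr rfl hk, sum_const, smul_eq_mul]

theorem extFam_eq_filter (n : ℕ) (U : Finset (Finset ℕ)) (l : ℕ) :
    extFam n U l = {d ∈ (Icc 1 n).powersetCard l | #{t ∈ U | t ⊆ d} ≠ 0} := by
  simp only [extFam, ← pos_iff_ne_zero, card_pos, filter_nonempty_iff]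

theorem card_doubleMarks (n : ℕ) (U : Finset (Finset ℕ)) (l : ℕ) :
    #(doubleMarks n U l) = ∑ d ∈ (Icc 1 n).powersetCard l, #{t ∈ U | t ⊆ d} ^ 2 := by
  have maps : ∀ x ∈ doubleMarks n U l, x.2.2 ∈ (Icc 1 n).powersetCard l := fun x hx ↦
    (mem_product.mp (mem_product.mp (mem_filter.mp hx).1).2).2
  rw [card_eq_sum_card_fiberwise maps]
  refine sum_congr rfl fun d hd ↦ ?_
  have fiber : {x ∈ doubleMarks n U l | x.2.2 = d} =
      {t ∈ U | t ⊆ d} ×ˢ {t ∈ U | t ⊆ d} ×ˢ {d} := by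
    ext ⟨t, t', e⟩
    simp only [doubleMarks, mem_filter, mem_product, mem_singleton, union_subset_iff]
    grind
  rw [fiber, card_product, card_product, card_singleton, mul_one, sq]

theorem stmt_8_general (n m l : ℕ) (hml : m ≤ l)
    (U : Finset (Finset ℕ)) (hU : U ⊆ (Finset.Icc 1 n).powersetCard m) :
    (extFam n U l).card * (doubleMarks n U l).card ≥
      (U.card * (n - m).choose (l - m)) ^ 2 := by
  have marks : ∑ d ∈ (Icc 1 n).powersetCard l, #{t ∈ U | t ⊆ d} = #U * (n - m).choose (l - m) :=
    sum_card_filter_subset_eq_card_mul fun t ht ↦ by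
      obtain ⟨htn, rfl⟩ := mem_powersetCard.mp (hU ht)
      simpa using card_filter_powersetCard_subset t (Icc 1 n) l htn hml
  rw [ge_iff_le, ← marks, extFam_eq_filter, card_doubleMarks]
  exact sq_sum_le_card_filter_ne_zero_mul_sum_sq _ _

theorem stmt_8 (n m l : ℕ) (hml : m ≤ l) (hln : l ≤ n)
    (U : Finset (Finset ℕ)) (hU : U ⊆ (Finset.Icc 1 n).powersetCard m) :
    (extFam n U l).card * (doubleMarks n U l).card ≥
      (U.card * (n - m).choose (l - m)) ^ 2 :=
  stmt_8_general n m l hml U hU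
end

section
/- Let n, m, l be natural numbers with m ≤ l ≤ n, let U be a family of m-element subsets of [n], and let D = {(t, t', d) : t ∈ U, t' ∈ U, d ⊆ [n], |d| = l, t ∪ t' ⊆ d} be the set of double marks. Then |D| ≤ |U| · C(n−m, l−m) · C(l, m). -/
open Finset

namespace Finset

variable {α β : Type*} (s : Finset α) (t : Finset β) (p : α → β → Prop)
  [∀ a b, Decidable (p a b)]

theorem card_filter_product_eq_sum_left :
    #{x ∈ s ×ˢ t | p x.1 x.2} = ∑ a ∈ s, #{b ∈ t | p a b} := by
  simp only [card_filter, sum_product]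

theorem card_filter_product_eq_sum_right :
    #{x ∈ s ×ˢ t | p x.1 x.2} = ∑ b ∈ t, #{a ∈ s | p a b} := by
  simp only [card_filter, sum_product_right]

end Finset

theorem card_filter_subset_le_choose {α : Type*} [DecidableEq α] {U : Finset (Finset α)} {m : ℕ}
    (hU : ∀ t ∈ U, #t = m) (d : Finset α) : #{t ∈ U | t ⊆ d} ≤ (#d).choose m := by
  rw [← card_powersetCard]
  exact card_le_card fun t ht => mem_powersetCard.2
    ⟨(mem_filter.1 ht).2, hU t (mem_filter.1 ht).1⟩

theorem card_filter_union_subset_le {α : Type*} [DecidableEq α] {U P : Finset (Finset α)}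
    {m l : ℕ} (hU : ∀ t ∈ U, #t = m) (hP : ∀ d ∈ P, #d = l) (t : Finset α) :
    #{y ∈ U ×ˢ P | t ∪ y.1 ⊆ y.2} ≤ #{d ∈ P | t ⊆ d} * l.choose m := by
  calc #{y ∈ U ×ˢ P | t ∪ y.1 ⊆ y.2}
      = ∑ d ∈ P with t ⊆ d, #{t' ∈ U | t ∪ t' ⊆ d} := by
        rw [card_filter_product_eq_sum_right U P (fun t' d => t ∪ t' ⊆ d), sum_filter_of_ne]
        intro d _ hne
        obtain ⟨t', ht'⟩ := card_ne_zero.1 hne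
        exact subset_union_left.trans (mem_filter.1 ht').2
    _ ≤ ∑ d ∈ P with t ⊆ d, l.choose m := by
        refine sum_le_sum fun d hd => ?_
        calc #{t' ∈ U | t ∪ t' ⊆ d}
            ≤ #{t' ∈ U | t' ⊆ d} :=
              card_le_card (monotone_filter_right _ fun _ _ => subset_union_right.trans)
          _ ≤ (#d).choose m := card_filter_subset_le_choose hU d
          _ = l.choose m := by rw [hP d (mem_filter.1 hd).1]
    _ = #{d ∈ P | t ⊆ d} * l.choose m := by rw [sum_const, smul_eq_mul]

theorem stmt_9_general (n m l : ℕ) (hml : m ≤ l)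
    (U : Finset (Finset ℕ)) (hU : U ⊆ (Finset.Icc 1 n).powersetCard m) :
    (doubleMarks n U l).card ≤ U.card * (n - m).choose (l - m) * l.choose m := by
  set P := (Icc 1 n).powersetCard l
  have hfiber (t : Finset ℕ) (ht : t ∈ U) :
      #{y ∈ U ×ˢ P | t ∪ y.1 ⊆ y.2} ≤ (n - m).choose (l - m) * l.choose m := by
    obtain ⟨htn, htm⟩ := mem_powersetCard.1 (hU ht)
    have hsupersets : #{d ∈ P | t ⊆ d} = (n - m).choose (l - m) := by
      simpa [htm] using card_filter_powersetCard_subset t (Icc 1 n) l htn (htm ▸ hml)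
    rw [← hsupersets]
    exact card_filter_union_subset_le (fun t' ht' => (mem_powersetCard.1 (hU ht')).2)
      (fun d hd => (mem_powersetCard.1 hd).2) t
  calc #(doubleMarks n U l)
      = ∑ t ∈ U, #{y ∈ U ×ˢ P | t ∪ y.1 ⊆ y.2} :=
        card_filter_product_eq_sum_left U (U ×ˢ P) (fun t y => t ∪ y.1 ⊆ y.2)
    _ ≤ ∑ _t ∈ U, (n - m).choose (l - m) * l.choose m := sum_le_sum hfiber
    _ = #U * (n - m).choose (l - m) * l.choose m := by
        rw [sum_const, smul_eq_mul, mul_assoc]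

theorem stmt_9 (n m l : ℕ) (hml : m ≤ l) (hln : l ≤ n)
    (U : Finset (Finset ℕ)) (hU : U ⊆ (Finset.Icc 1 n).powersetCard m) :
    (doubleMarks n U l).card ≤ U.card * (n - m).choose (l - m) * l.choose m :=
  stmt_9_general n m l hml U hU
end

section
/- Let n, m be natural numbers with m ≤ n, let U be a family of m-element subsets of [n], and let X be a finite set disjoint from [n]. Let V = {b ⊆ [n] ∪ X : |b| = m + |X| and there exists s ∈ U with s ⊆ b} be the space-augmenting extension of U from [n] into [n] ∪ X. Then |V| = Σ_{j=0}^{|X|} |Ext(U, m+j)| · C(|X|, |X| − j), where Ext(U, m+j) is taken inside the space [n]. -/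
open Finset

namespace Finset

variable {α : Type*} [DecidableEq α] {A X : Finset α}

lemma inter_union_inter_eq_self {b : Finset α} (hb : b ⊆ A ∪ X) : b ∩ A ∪ b ∩ X = b := by
  rw [← inter_union_distrib_left, inter_eq_left.mpr hb]

lemma card_inter_add_card_inter_of_disjoint (hAX : Disjoint A X) {b : Finset α}
    (hb : b ⊆ A ∪ X) : #(b ∩ A) + #(b ∩ X) = #b := by
  rw [← card_union_of_disjoint (hAX.mono inter_subset_right inter_subset_right),
    inter_union_inter_eq_self hb]

lemma union_inter_eq_left_of_disjoint {t u : Finset α} (ht : t ⊆ A) (hu : Disjoint u A) :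
    (t ∪ u) ∩ A = t := by
  rw [union_inter_distrib_right, inter_eq_left.mpr ht, disjoint_iff_inter_eq_empty.mp hu,
    union_empty]

lemma card_filter_powersetCard_union_of_card_inter_eq (hAX : Disjoint A X)
    (P : Finset α → Prop) [DecidablePred P] {k i : ℕ} (hik : i ≤ k) :
    #{b ∈ (A ∪ X).powersetCard k | P (b ∩ A) ∧ #(b ∩ A) = i} =
      #{t ∈ A.powersetCard i | P t} * (#X).choose (k - i) := by
  rw [← card_powersetCard, ← card_product]
  refine card_bij' (fun b _ => (b ∩ A, b ∩ X)) (fun p _ => p.1 ∪ p.2) ?_ ?_ ?_ ?_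
  · intro b hb
    simp only [mem_filter, mem_powersetCard, mem_product] at hb ⊢
    obtain ⟨⟨hbAX, hbk⟩, hP, hbA⟩ := hb
    have := card_inter_add_card_inter_of_disjoint hAX hbAX
    exact ⟨⟨⟨inter_subset_right, hbA⟩, hP⟩, inter_subset_right, by omega⟩
  · rintro ⟨t, u⟩ htu
    simp only [mem_filter, mem_powersetCard, mem_product] at htu ⊢
    obtain ⟨⟨⟨htA, hti⟩, hP⟩, huX, huk⟩ := htu
    have htuA : (t ∪ u) ∩ A = t := union_inter_eq_left_of_disjoint htA (hAX.symm.mono_left huX)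
    rw [htuA, card_union_of_disjoint ((hAX.mono_left htA).mono_right huX)]
    exact ⟨⟨union_subset_union htA huX, by omega⟩, hP, hti⟩
  · intro b hb
    exact inter_union_inter_eq_self (mem_powersetCard.mp (mem_filter.mp hb).1).1
  · rintro ⟨t, u⟩ htu
    simp only [mem_filter, mem_powersetCard, mem_product] at htu
    obtain ⟨⟨⟨htA, -⟩, -⟩, huX, -⟩ := htu
    dsimp only
    rw [union_inter_eq_left_of_disjoint htA (hAX.symm.mono_left huX), union_comm,
      union_inter_eq_left_of_disjoint huX (hAX.mono_left htA)]

lemma card_filter_powersetCard_union_of_disjoint (hAX : Disjoint A X)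
    (P : Finset α → Prop) [DecidablePred P] (k : ℕ) :
    #{b ∈ (A ∪ X).powersetCard k | P (b ∩ A)} =
      ∑ i ∈ range (k + 1), #{t ∈ A.powersetCard i | P t} * (#X).choose (k - i) := by
  rw [card_eq_sum_card_fiberwise (f := fun b => #(b ∩ A)) (t := range (k + 1))]
  · refine sum_congr rfl fun i hi => ?_
    rw [filter_filter]
    exact card_filter_powersetCard_union_of_card_inter_eq hAX P
      (Nat.lt_succ_iff.mp (mem_range.mp hi))
  · intro b hb
    have hbk := (mem_powersetCard.mp (mem_filter.mp hb).1).2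
    exact mem_range.mpr (Nat.lt_succ_of_le (hbk ▸ card_le_card inter_subset_left))

end Finset

lemma extFam_eq_empty_of_lt {n m l : ℕ} {U : Finset (Finset ℕ)} (hU : ∀ s ∈ U, #s = m)
    (hl : l < m) : extFam n U l = ∅ := by
  refine filter_eq_empty_iff.mpr fun t ht ⟨s, hs, hst⟩ => ?_
  have := card_le_card hst
  rw [hU s hs, (mem_powersetCard.mp ht).2] at this
  omega

theorem stmt_11_general (n m : ℕ)
    (U : Finset (Finset ℕ)) (hU : U ⊆ (Finset.Icc 1 n).powersetCard m)
    (X : Finset ℕ) (hX : Disjoint X (Finset.Icc 1 n)) :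
    (((Finset.Icc 1 n ∪ X).powersetCard (m + X.card)).filter
        (fun b => ∃ s ∈ U, s ⊆ b)).card =
      ∑ j ∈ Finset.range (X.card + 1),
        (extFam n U (m + j)).card * X.card.choose (X.card - j) := by
  have hUA (s) (hs : s ∈ U) := mem_powersetCard.mp (hU hs)
  have hcontains_iff (b : Finset ℕ) : (∃ s ∈ U, s ⊆ b) ↔ ∃ s ∈ U, s ⊆ b ∩ Icc 1 n :=
    exists_congr fun s => and_congr_right fun hs =>
      ⟨fun h => subset_inter h (hUA s hs).1, fun h => h.trans inter_subset_left⟩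
  rw [filter_congr fun b _ => hcontains_iff b,
    card_filter_powersetCard_union_of_disjoint hX.symm (fun t => ∃ s ∈ U, s ⊆ t)]
  change ∑ i ∈ range (m + #X + 1), #(extFam n U i) * (#X).choose (m + #X - i) = _
  rw [add_assoc, sum_range_add]
  have hsmall : ∀ i ∈ range m, #(extFam n U i) * (#X).choose (m + #X - i) = 0 := fun i hi => by
    rw [extFam_eq_empty_of_lt (fun s hs => (hUA s hs).2) (mem_range.mp hi), card_empty, zero_mul]
  simp only [sum_eq_zero hsmall, zero_add, Nat.add_sub_add_left]

theorem stmt_11 (n m : ℕ) (hmn : m ≤ n)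
    (U : Finset (Finset ℕ)) (hU : U ⊆ (Finset.Icc 1 n).powersetCard m)
    (X : Finset ℕ) (hX : Disjoint X (Finset.Icc 1 n)) :
    (((Finset.Icc 1 n ∪ X).powersetCard (m + X.card)).filter
        (fun b => ∃ s ∈ U, s ⊆ b)).card =
      ∑ j ∈ Finset.range (X.card + 1),
        (extFam n U (m + j)).card * X.card.choose (X.card - j) :=
  stmt_11_general n m U hU X hX
end

section
/- Let n, l₀ be natural numbers with l₀ ≥ 1, let A be any family of l₀-element subsets of [n], and let b ⊆ [n] be a set with l₀ ≤ n − |b|. Then |{ s ⊆ [n] \ b : |s| = l₀ and there exists t ∈ A with t ⊆ b ∪ s }| · C(n, l₀) ≥ C(n − |b|, l₀) · |A|. -/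
/-!
Remove the points of `b` one at a time. For `x ∈ V`, the family `A'` of `l`-sets `s ⊆ V \ {x}`
with `A ∋ t ⊆ s ∪ {x}` has density at least that of `A`, i.e.
`|A'| / C(|V| - 1, l) ≥ |A| / C(|V|, l)`: sets of `A` avoiding `x` lie in `A'`, and those
through `x` are handled by a local LYM double counting. Moreover, every `l`-set covering a member
of `A'` together with `b \ {x}` covers a member of `A` together with `b`, so the densities
only increase along the induction.
-/

open Finset

section

variable {α : Type*} [DecidableEq α]

def coveringSets (A : Finset (Finset α)) (b U : Finset α) (l : ℕ) : Finset (Finset α) :=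
  {s ∈ U.powersetCard l | ∃ t ∈ A, t ⊆ b ∪ s}

variable {A : Finset (Finset α)} {b c s U V W : Finset α} {l : ℕ}

lemma mem_coveringSets :
    s ∈ coveringSets A b U l ↔ (s ⊆ U ∧ s.card = l) ∧ ∃ t ∈ A, t ⊆ b ∪ s := by
  rw [coveringSets, mem_filter, mem_powersetCard]

lemma subset_coveringSets_empty (hA : A ⊆ U.powersetCard l) : A ⊆ coveringSets A ∅ U l :=
  fun t ht => mem_coveringSets.2 ⟨mem_powersetCard.1 (hA ht), t, ht, by rw [empty_union]⟩

lemma coveringSets_coveringSets_subset :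
    coveringSets (coveringSets A c W l) b U l ⊆ coveringSets A (c ∪ b) U l := by
  intro s hs
  obtain ⟨hsU, u, hu, hus⟩ := mem_coveringSets.1 hs
  obtain ⟨-, t, ht, htu⟩ := mem_coveringSets.1 hu
  refine mem_coveringSets.2 ⟨hsU, t, ht, htu.trans ?_⟩
  rw [union_assoc]
  exact union_subset_union_right hus

lemma filter_notMem_subset_coveringSets_singleton (hA : A ⊆ V.powersetCard l) (x : α) :
    {t ∈ A | x ∉ t} ⊆ coveringSets A {x} (V.erase x) l := by
  intro t ht
  obtain ⟨htA, hxt⟩ := mem_filter.1 ht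
  obtain ⟨htV, htl⟩ := mem_powersetCard.1 (hA htA)
  exact mem_coveringSets.2
    ⟨⟨subset_erase.2 ⟨htV, hxt⟩, htl⟩, t, htA, subset_union_right⟩

/- Double counting: each `t ∋ x` of `A` covers the `|V| - l` sets `(t \ {x}) ∪ {y}`,
`y ∈ V \ t`, and an `l`-set `s ∌ x` is covered by at most `l` such `t`, namely
`(s \ {y}) ∪ {x}` for `y ∈ s`. -/
lemma card_filter_mem_mul_le_card_coveringSets_singleton_mul (hA : A ⊆ V.powersetCard l)
    (x : α) :
    {t ∈ A | x ∈ t}.card * (V.card - l) ≤ (coveringSets A {x} (V.erase x) l).card * l := by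
  refine card_mul_le_card_mul (fun t s => t ⊆ insert x s) (fun t ht => ?_) (fun s hs => ?_)
  · obtain ⟨htA, hxt⟩ := mem_filter.1 ht
    obtain ⟨htV, htl⟩ := mem_powersetCard.1 (hA htA)
    rw [← htl, ← card_sdiff_of_subset htV]
    refine card_le_card_of_injOn (fun y => insert y (t.erase x)) (fun y hy => ?_) ?_
    · obtain ⟨hyV, hyt⟩ := mem_sdiff.1 hy
      have hyx : y ≠ x := fun h => hyt (h ▸ hxt)
      have hy' : y ∉ t.erase x := fun h => hyt (mem_of_mem_erase h)
      refine (mem_bipartiteAbove _).2 ⟨mem_coveringSets.2 ⟨⟨?_, ?_⟩, t, htA, ?_⟩, ?_⟩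
      · exact insert_subset (mem_erase.2 ⟨hyx, hyV⟩) (erase_subset_erase x htV)
      · rw [card_insert_of_notMem hy', card_erase_add_one hxt, htl]
      · rw [singleton_union, insert_comm, insert_erase hxt]
        exact subset_insert y t
      · rw [insert_comm, insert_erase hxt]
        exact subset_insert y t
    · intro y hy z hz hyz
      exact (insert_inj (fun h => (mem_sdiff.1 hy).2 (mem_of_mem_erase h))).1 hyz
  · obtain ⟨⟨-, hsl⟩, -⟩ := mem_coveringSets.1 hs
    calc (bipartiteBelow (fun t s => t ⊆ insert x s) {t ∈ A | x ∈ t} s).card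
        ≤ (s.image fun y => insert x (s.erase y)).card := card_le_card fun t ht => ?_
      _ ≤ l := hsl ▸ card_image_le
    obtain ⟨htA', hts⟩ := (mem_bipartiteBelow _).1 ht
    obtain ⟨htA, hxt⟩ := mem_filter.1 htA'
    have htl := (mem_powersetCard.1 (hA htA)).2
    obtain ⟨y, hy, hys⟩ : ∃ y ∉ t.erase x, insert y (t.erase x) = s := by
      refine exists_eq_insert_iff.2 ⟨?_, by rw [card_erase_add_one hxt, htl, hsl]⟩
      exact subset_insert_iff.1 hts
    refine mem_image.2 ⟨y, hys ▸ mem_insert_self y _, ?_⟩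
    rw [← hys, erase_insert hy, insert_erase hxt]

lemma card_sub_mul_card_le_card_coveringSets_singleton_mul (hA : A ⊆ V.powersetCard l) (x : α) :
    (V.card - l) * A.card ≤ (coveringSets A {x} (V.erase x) l).card * V.card := by
  obtain hVl | hlV := lt_or_ge V.card l
  · simp [Nat.sub_eq_zero_of_le hVl.le]
  set A' := coveringSets A {x} (V.erase x) l
  have hwith : {t ∈ A | x ∈ t}.card * (V.card - l) ≤ A'.card * l :=
    card_filter_mem_mul_le_card_coveringSets_singleton_mul hA x
  have hwithout : {t ∈ A | x ∉ t}.card ≤ A'.card :=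
    card_le_card (filter_notMem_subset_coveringSets_singleton hA x)
  calc (V.card - l) * A.card
      = {t ∈ A | x ∈ t}.card * (V.card - l) + (V.card - l) * {t ∈ A | x ∉ t}.card := by
        rw [← card_filter_add_card_filter_not (s := A) (x ∈ ·)]; ring
    _ ≤ A'.card * l + (V.card - l) * A'.card := by gcongr
    _ = A'.card * (l + (V.card - l)) := by ring
    _ = A'.card * V.card := by rw [Nat.add_sub_cancel' hlV]

theorem choose_mul_card_le_card_coveringSets_mul_choose
    (hA : A ⊆ V.powersetCard l) (hb : b ⊆ V) :
    (V.card - b.card).choose l * A.card ≤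
      (coveringSets A b (V \ b) l).card * V.card.choose l := by
  induction b using Finset.induction_on generalizing V A with
  | empty =>
    rw [card_empty, Nat.sub_zero, sdiff_empty, mul_comm]
    exact Nat.mul_le_mul_right _ (card_le_card (subset_coveringSets_empty hA))
  | @insert x b hxb ih =>
    obtain hl | hl := lt_or_ge (V.card - (insert x b).card) l
    · simp [Nat.choose_eq_zero_of_lt hl]
    have hxV : x ∈ V := hb (mem_insert_self x b)
    set A' := coveringSets A {x} (V.erase x) l
    set M := (V.erase x).card
    have hM : V.card = M + 1 := (card_erase_add_one hxV).symm
    rw [card_insert_of_notMem hxb, hM, Nat.add_sub_add_right] at hl ⊢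
    have hstep : (M + 1 - l) * A.card ≤ A'.card * (M + 1) :=
      hM ▸ card_sub_mul_card_le_card_coveringSets_singleton_mul hA x
    have hrec : (M - b.card).choose l * A'.card ≤
        (coveringSets A' b (V.erase x \ b) l).card * M.choose l :=
      ih (filter_subset _ _) (subset_erase.2 ⟨(subset_insert x b).trans hb, hxb⟩)
    have hcover : (coveringSets A' b (V.erase x \ b) l).card ≤
        (coveringSets A (insert x b) (V \ insert x b) l).card := by
      rw [erase_sdiff_comm, ← sdiff_insert, insert_eq]
      exact card_le_card coveringSets_coveringSets_subset
    have hchoose : M.choose l * (M + 1) = (M + 1).choose l * (M + 1 - l) :=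
      Nat.choose_mul_succ_eq M l
    refine Nat.le_of_mul_le_mul_right ?_ (show 0 < M + 1 - l by omega)
    calc (M - b.card).choose l * A.card * (M + 1 - l)
        = (M - b.card).choose l * ((M + 1 - l) * A.card) := by ring
      _ ≤ (M - b.card).choose l * (A'.card * (M + 1)) := by gcongr
      _ = (M - b.card).choose l * A'.card * (M + 1) := by ring
      _ ≤ (coveringSets A' b (V.erase x \ b) l).card * M.choose l * (M + 1) := by gcongr
      _ = (coveringSets A' b (V.erase x \ b) l).card * ((M + 1).choose l * (M + 1 - l)) := by
        rw [mul_assoc, hchoose]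
      _ ≤ _ := by rw [← mul_assoc]; gcongr
end

theorem stmt_12_general (n l₀ : ℕ)
    (A : Finset (Finset ℕ)) (hA : A ⊆ (Finset.Icc 1 n).powersetCard l₀)
    (b : Finset ℕ) (hb : b ⊆ Finset.Icc 1 n) :
    (((Finset.Icc 1 n \ b).powersetCard l₀).filter
        (fun s => ∃ t ∈ A, t ⊆ b ∪ s)).card * n.choose l₀ ≥
      (n - b.card).choose l₀ * A.card := by
  have h := choose_mul_card_le_card_coveringSets_mul_choose hA hb
  rwa [Nat.card_Icc, Nat.add_sub_cancel] at h

theorem stmt_12 (n l₀ : ℕ) (hl₀ : 1 ≤ l₀)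
    (A : Finset (Finset ℕ)) (hA : A ⊆ (Finset.Icc 1 n).powersetCard l₀)
    (b : Finset ℕ) (hb : b ⊆ Finset.Icc 1 n) (hcard : l₀ ≤ n - b.card) :
    (((Finset.Icc 1 n \ b).powersetCard l₀).filter
        (fun s => ∃ t ∈ A, t ⊆ b ∪ s)).card * n.choose l₀ ≥
      (n - b.card).choose l₀ * A.card :=
  stmt_12_general n l₀ A hA b hb
end

section
/- There exist constants c ∈ (0,1), ρ > 0 and a natural number n₀ such that the following holds: for every n ≥ n₀, every m ≥ 1 with m² ≤ c·n, every l₀ with m² < l₀ ≤ n, and every nonempty family U of m-element subsets of [n], there exists a set g ⊆ [n] with |g| ≤ κ(U) / ln(l₀/m²) such that |Ext(U_g, l₀)| ≥ C(n − |g|, l₀ − |g|) · (1 − e^{−ρ}). -/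
/-- The sparsity `κ(U) = ln C(n,m) − ln |U|` of a family of `m`-subsets of `[n]`. -/
noncomputable def sparsity (n m : ℕ) (U : Finset (Finset ℕ)) : ℝ :=
  Real.log (n.choose m) - Real.log U.card

/-!
Fix the weight `r = m (n - m) / l₀` and take `g ⊆ [n]` maximising `|U_g| r^|g|`.

Comparing with `g = ∅` gives `|U| ≤ |U_g| r^|g| ≤ C(n - |g|, m - |g|) r^|g|`, and since
`C(n - k, m - k) ≤ (m / (n - m))^k C(n, m)` this says `|U| (l₀ / m²)^|g| ≤ C(n, m)`, which is
the bound on `|g|`.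

Comparing with `g ∪ h` shows that the link `W = {s \ g : s ∈ U_g}` is spread:
`|W_h| r^|h| ≤ |W|` for every `h` disjoint from `g`. For a spread family `W` of `m`-sets in an
`N`-set, let `c_T` be the number of members of `W` inside the `l`-set `T`. Then
`Σ c_T = |W| C(N - m, l - m)`, and grouping pairs of members by their intersection, spreadness gives
`Σ c_T² ≤ |W|² Σ_j C(m, j) C(N - 2m + j, l - 2m + j) r⁻ʲ`. Bounding consecutive ratios of binomial
coefficients turns this sum into a binomial expansion `(x + y)^m` with `x + y ≤ 1 + 4/m`, so it is
at most `e⁴ ≤ 64` times `C(N - m, l - m)² / C(N, l)`. By Cauchy–Schwarz,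
`(Σ c_T)² ≤ #{T : c_T ≠ 0} · Σ c_T²`, so at least `C(N, l) / 64` of the `l`-sets contain a member
of `W`; adding `g` back to them gives the extension bound with `ρ = ln (64/63)`.
-/

open Finset

lemma choose_le_mul_choose_add_one {a b : ℕ} {q : ℝ} (h : (b + 1 : ℝ) ≤ q * (a + 1)) :
    (a.choose b : ℝ) ≤ q * (a + 1).choose (b + 1) := by
  have hrec : ((a + 1 : ℕ) : ℝ) * a.choose b = (a + 1).choose (b + 1) * (b + 1 : ℕ) := by
    exact_mod_cast Nat.add_one_mul_choose_eq a b
  push_cast at hrec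
  have hC : (0 : ℝ) ≤ (a + 1).choose (b + 1) := by positivity
  refine le_of_mul_le_mul_left ?_ (by positivity : (0 : ℝ) < a + 1)
  calc ((a : ℝ) + 1) * a.choose b = (a + 1).choose (b + 1) * (b + 1) := hrec
    _ ≤ (a + 1).choose (b + 1) * (q * (a + 1)) := mul_le_mul_of_nonneg_left h hC
    _ = (a + 1) * (q * (a + 1).choose (b + 1)) := by ring

lemma choose_add_one_le_mul_choose {a b : ℕ} {w : ℝ} (h : (a + 1 : ℝ) ≤ w * (b + 1)) :
    ((a + 1).choose (b + 1) : ℝ) ≤ w * a.choose b := by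
  have hrec : ((a + 1 : ℕ) : ℝ) * a.choose b = (a + 1).choose (b + 1) * (b + 1 : ℕ) := by
    exact_mod_cast Nat.add_one_mul_choose_eq a b
  push_cast at hrec
  have hC : (0 : ℝ) ≤ a.choose b := by positivity
  refine le_of_mul_le_mul_right ?_ (by positivity : (0 : ℝ) < b + 1)
  calc ((a + 1).choose (b + 1) : ℝ) * (b + 1) = (a + 1) * a.choose b := hrec.symm
    _ ≤ w * (b + 1) * a.choose b := mul_le_mul_of_nonneg_right h hC
    _ = w * a.choose b * (b + 1) := by ring

lemma choose_le_pow_mul_choose_add {a b k : ℕ} {q : ℝ} (hq : (b + k : ℝ) ≤ q * (a + 1)) :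
    (a.choose b : ℝ) ≤ q ^ k * (a + k).choose (b + k) := by
  induction k with
  | zero => simp
  | succ k ih =>
    push_cast at hq
    have hq0 : 0 ≤ q := by nlinarith [(b : ℕ).cast_nonneg (α := ℝ), (a : ℕ).cast_nonneg (α := ℝ)]
    calc (a.choose b : ℝ) ≤ q ^ k * (a + k).choose (b + k) := ih (by linarith)
      _ ≤ q ^ k * (q * (a + k + 1).choose (b + k + 1)) := by
          gcongr
          exact choose_le_mul_choose_add_one (a := a + k) (b := b + k) (by push_cast; nlinarith)
      _ = q ^ (k + 1) * (a + k + 1).choose (b + k + 1) := by ring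

lemma choose_add_le_pow_mul_choose {a b k : ℕ} {w : ℝ} (hw : (a + k : ℝ) ≤ w * (b + 1)) :
    ((a + k).choose (b + k) : ℝ) ≤ w ^ k * a.choose b := by
  induction k with
  | zero => simp
  | succ k ih =>
    push_cast at hw
    have hw0 : 0 ≤ w := by nlinarith [(b : ℕ).cast_nonneg (α := ℝ), (a : ℕ).cast_nonneg (α := ℝ)]
    calc ((a + (k + 1)).choose (b + (k + 1)) : ℝ) ≤ w * (a + k).choose (b + k) :=
          choose_add_one_le_mul_choose (a := a + k) (b := b + k) (by push_cast; nlinarith)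
      _ ≤ w * (w ^ k * a.choose b) := mul_le_mul_of_nonneg_left (ih (by linarith)) hw0
      _ = w ^ (k + 1) * a.choose b := by ring

lemma choose_sub_le_pow_mul_choose {n m k : ℕ} (hmn : m < n) (hkm : k ≤ m) :
    ((n - k).choose (m - k) : ℝ) ≤ ((m : ℝ) / (n - m)) ^ k * n.choose m := by
  have hnm : (0 : ℝ) < n - m := by
    have : (m : ℝ) < n := by exact_mod_cast hmn
    linarith
  have h := choose_le_pow_mul_choose_add (a := n - k) (b := m - k) (k := k) (q := m / (n - m)) ?_
  · rwa [Nat.sub_add_cancel (hkm.trans hmn.le), Nat.sub_add_cancel hkm] at h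
  · rw [div_mul_eq_mul_div, le_div_iff₀ hnm, Nat.cast_sub hkm, Nat.cast_sub (by omega)]
    have : (k : ℝ) ≤ m := by exact_mod_cast hkm
    nlinarith

lemma choose_sub_two_mul_add_le {N m l j : ℕ} (hl : 2 * m ≤ l) (hN : 2 * m < N) (hj : j ≤ m) :
    ((N - 2 * m + j).choose (l - 2 * m + j) : ℝ) ≤
      (((l : ℝ) - m) / (N - 2 * m + 1)) ^ (m - j) * (N - m).choose (l - m) := by
  have h := choose_le_pow_mul_choose_add (a := N - 2 * m + j) (b := l - 2 * m + j) (k := m - j)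
    (q := ((l : ℝ) - m) / (N - 2 * m + 1)) ?_
  · convert h using 4 <;> omega
  · have hN' : 2 * (m : ℝ) < N := by exact_mod_cast hN
    have hl' : 2 * (m : ℝ) ≤ l := by exact_mod_cast hl
    rw [div_mul_eq_mul_div, le_div_iff₀ (by linarith)]
    push_cast [Nat.cast_sub hl, Nat.cast_sub hN.le, Nat.cast_sub hj]
    nlinarith [mul_nonneg (by linarith : (0 : ℝ) ≤ l - m) j.cast_nonneg]

lemma choose_le_pow_mul_choose_sub {N m l : ℕ} (hl : m ≤ l) (hN : m ≤ N) :
    (N.choose l : ℝ) ≤ ((N : ℝ) / (l - m + 1)) ^ m * (N - m).choose (l - m) := by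
  have h := choose_add_le_pow_mul_choose (a := N - m) (b := l - m) (k := m)
    (w := (N : ℝ) / (l - m + 1)) ?_
  · rwa [Nat.sub_add_cancel hN, Nat.sub_add_cancel hl] at h
  · have hl' : (m : ℝ) ≤ l := by exact_mod_cast hl
    rw [div_mul_eq_mul_div, le_div_iff₀ (by linarith), Nat.cast_sub hN,
      Nat.cast_sub hl]
    nlinarith

lemma exp_four_le : Real.exp 4 ≤ 64 := by
  have h := Real.exp_one_lt_d9
  calc Real.exp 4 = Real.exp 1 ^ 4 := by rw [← Real.exp_nat_mul]; norm_num
    _ ≤ 2.7182818286 ^ 4 := by gcongr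
    _ ≤ 64 := by norm_num

lemma one_add_div_pow_le_exp (a : ℝ) {n : ℕ} (hn : n ≠ 0) (ha : 0 ≤ 1 + a / n) :
    (1 + a / n) ^ n ≤ Real.exp a := by
  calc (1 + a / n) ^ n ≤ Real.exp (a / n) ^ n := by
        gcongr
        linarith [Real.add_one_le_exp (a / n)]
    _ = Real.exp a := by rw [← Real.exp_nat_mul, mul_div_cancel₀ _ (by exact_mod_cast hn)]

lemma binomial_ratios_le_one_add_four_div {m N l : ℝ} (hm : 1 ≤ m) (hl : m ^ 2 + 1 ≤ l)
    (hN : 100 * m ^ 2 ≤ N) :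
    N / (l - m + 1) * (l / (m * (N - m))) + N / (l - m + 1) * ((l - m) / (N - 2 * m + 1))
      ≤ 1 + 4 / m := by
  have ha : 0 < l - m + 1 := by nlinarith
  have hb : 0 < N - 2 * m + 1 := by nlinarith
  have hc : 0 < m * (N - m) := by nlinarith
  have hx : N / (l - m + 1) * (l / (m * (N - m))) ≤ 2 / m := by
    rw [div_mul_div_comm, div_le_div_iff₀ (mul_pos ha hc) (by positivity)]
    have hNm : 9 * N ≤ 10 * (N - m) := by nlinarith
    have hlm : 3 * l ≤ 5 * (l - m + 1) := by nlinarith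
    nlinarith [mul_le_mul hNm hlm (by linarith) (by linarith)]
  have hy : N / (l - m + 1) * ((l - m) / (N - 2 * m + 1)) ≤ (m + 2) / m := by
    rw [div_mul_div_comm, div_le_div_iff₀ (by positivity) (by positivity)]
    nlinarith [mul_le_mul_of_nonneg_left (by nlinarith : N * m ≤ (m + 2) * (N - 2 * m + 1))
      (by nlinarith : 0 ≤ l - m)]
  calc _ ≤ 2 / m + (m + 2) / m := add_le_add hx hy
    _ = 1 + 4 / m := by field_simp; ring

lemma binomial_ratios_pow_le {m : ℕ} {N l : ℝ} (hm : 0 < m) (hl : (m : ℝ) ^ 2 + 1 ≤ l)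
    (hN : 100 * (m : ℝ) ^ 2 ≤ N) :
    (N / (l - m + 1) * (l / (m * (N - m))) + N / (l - m + 1) * ((l - m) / (N - 2 * m + 1))) ^ m
      ≤ 64 := by
  have hm' : (1 : ℝ) ≤ m := by exact_mod_cast hm
  have hpos : 0 ≤ N / (l - m + 1) * (l / (m * (N - m))) +
      N / (l - m + 1) * ((l - m) / (N - 2 * m + 1)) := by
    have hN' : 0 ≤ N / (l - m + 1) := div_nonneg (by nlinarith) (by nlinarith)
    exact add_nonneg (mul_nonneg hN' (div_nonneg (by nlinarith) (by nlinarith)))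
      (mul_nonneg hN' (div_nonneg (by nlinarith) (by nlinarith)))
  calc _ ≤ ((1 : ℝ) + 4 / m) ^ m :=
        pow_le_pow_left₀ hpos (binomial_ratios_le_one_add_four_div hm' hl hN) m
    _ ≤ Real.exp 4 := one_add_div_pow_le_exp 4 hm.ne' (by positivity)
    _ ≤ 64 := exp_four_le

lemma choose_mul_sum_le {N m l : ℕ} {r : ℝ} (hmr : (m : ℝ) * (N - m) ≤ r * l)
    (hml : m ^ 2 < l) (hN : 100 * m ^ 2 ≤ N) :
    (N.choose l : ℝ) * ∑ j ∈ range (m + 1),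
        m.choose j * (N - 2 * m + j).choose (l - 2 * m + j) * r⁻¹ ^ j
      ≤ 64 * ((N - m).choose (l - m) : ℝ) ^ 2 := by
  rcases Nat.eq_zero_or_pos m with rfl | hm
  · simp only [zero_add, range_one, sum_singleton, Nat.choose_self, mul_zero, Nat.sub_zero,
      add_zero, Nat.cast_one, one_mul, pow_zero, mul_one]
    nlinarith [sq_nonneg (N.choose l : ℝ)]
  have h2ml : 2 * m ≤ l := by nlinarith
  have h2mN : 2 * m < N := by nlinarith
  have hmR : (1 : ℝ) ≤ m := by exact_mod_cast hm
  have hlR : (m : ℝ) ^ 2 + 1 ≤ l := by exact_mod_cast hml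
  have hNR : 100 * (m : ℝ) ^ 2 ≤ N := by exact_mod_cast hN
  set B : ℝ := (((N - m).choose (l - m) : ℕ) : ℝ)
  set q : ℝ := (l - m) / (N - 2 * m + 1)
  set w : ℝ := N / (l - m + 1)
  set s : ℝ := l / (m * (N - m)) with hs
  have hl : (0 : ℝ) < l := by nlinarith
  have hq0 : 0 ≤ q := div_nonneg (by nlinarith) (by nlinarith)
  have hw0 : 0 ≤ w := div_nonneg (by positivity) (by nlinarith)
  have hs0 : 0 ≤ s := div_nonneg (by positivity) (by nlinarith)
  have hsr : s⁻¹ ≤ r := by rw [hs, inv_div, div_le_iff₀ hl]; exact hmr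
  have hs_inv : 0 < s⁻¹ := by rw [hs, inv_div]; exact div_pos (by nlinarith) hl
  have hr : 0 < r := hs_inv.trans_le hsr
  have hrs : r⁻¹ ≤ s := by simpa using inv_anti₀ hs_inv hsr
  have hAq : ∀ j ∈ range (m + 1), ((N - 2 * m + j).choose (l - 2 * m + j) : ℝ) ≤ q ^ (m - j) * B :=
    fun j hj => choose_sub_two_mul_add_le h2ml h2mN (Nat.lt_succ_iff.mp (mem_range.mp hj))
  have hCw : (N.choose l : ℝ) ≤ w ^ m * B := choose_le_pow_mul_choose_sub (by omega) (by omega)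
  have hxy : (w * s + w * q) ^ m ≤ 64 := binomial_ratios_pow_le hm hlR hNR
  have hB0 : 0 ≤ B := Nat.cast_nonneg _
  clear_value B q w s
  calc (N.choose l : ℝ) * ∑ j ∈ range (m + 1),
        m.choose j * (N - 2 * m + j).choose (l - 2 * m + j) * r⁻¹ ^ j
      ≤ (w ^ m * B) * ∑ j ∈ range (m + 1), m.choose j * (q ^ (m - j) * B) * s ^ j := by
        gcongr with j hj
        exact hAq j hj
    _ = B ^ 2 * ∑ j ∈ range (m + 1), (w * s) ^ j * (w * q) ^ (m - j) * m.choose j := by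
        rw [mul_sum, mul_sum]
        refine sum_congr rfl fun j hj => ?_
        rw [show w ^ m = w ^ j * w ^ (m - j) by
          rw [← pow_add, Nat.add_sub_cancel' (Nat.lt_succ_iff.mp (mem_range.mp hj))]]
        ring
    _ = B ^ 2 * (w * s + w * q) ^ m := by rw [add_pow]
    _ ≤ 64 * B ^ 2 := by nlinarith [sq_nonneg B]

section

variable {α : Type*} [DecidableEq α] {X : Finset α} {W : Finset (Finset α)} {m l : ℕ}

lemma sum_card_filter_subset (hW : W ⊆ X.powersetCard m) (hml : m ≤ l) :
    ∑ T ∈ X.powersetCard l, #(W.filter (· ⊆ T)) = #W * (#X - m).choose (l - m) := by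
  have := sum_card_bipartiteAbove_eq_sum_card_bipartiteBelow (s := X.powersetCard l) (t := W)
    (r := fun T s => s ⊆ T)
  simp only [bipartiteAbove, bipartiteBelow] at this
  rw [this, ← smul_eq_mul, ← sum_const]
  refine sum_congr rfl fun s hs => ?_
  obtain ⟨hsX, hsm⟩ := mem_powersetCard.mp (hW hs)
  rw [card_filter_powersetCard_subset s X l hsX (hsm ▸ hml), hsm]

lemma sq_card_filter_subset (T : Finset α) :
    #(W.filter (· ⊆ T)) ^ 2 = #((W ×ˢ W).filter (fun p => p.1 ∪ p.2 ⊆ T)) := by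
  simp only [union_subset_iff]
  rw [sq, ← card_product, filter_product (· ⊆ T) (· ⊆ T)]

lemma sum_sq_card_filter_subset (hW : W ⊆ X.powersetCard m) (hml : 2 * m ≤ l) :
    ∑ T ∈ X.powersetCard l, #(W.filter (· ⊆ T)) ^ 2 =
      ∑ s ∈ W, ∑ t ∈ W, (#X - #(s ∪ t)).choose (l - #(s ∪ t)) := by
  simp only [sq_card_filter_subset]
  have := sum_card_bipartiteAbove_eq_sum_card_bipartiteBelow (s := X.powersetCard l)
    (t := W ×ˢ W) (r := fun T p => p.1 ∪ p.2 ⊆ T)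
  simp only [bipartiteAbove, bipartiteBelow] at this
  rw [this, sum_product]
  refine sum_congr rfl fun s hs => sum_congr rfl fun t ht => ?_
  obtain ⟨hsX, hsm⟩ := mem_powersetCard.mp (hW hs)
  obtain ⟨htX, htm⟩ := mem_powersetCard.mp (hW ht)
  exact card_filter_powersetCard_subset _ X l (union_subset hsX htX)
    ((card_union_le s t).trans (by omega))

lemma sum_le_sum_powerset_mul_card_filter_subset (s : Finset α) (F : ℕ → ℕ) :
    ∑ t ∈ W, F #(s ∩ t) ≤ ∑ h ∈ s.powerset, #(W.filter (h ⊆ ·)) * F #h := by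
  rw [← sum_fiberwise_of_maps_to (g := (s ∩ ·)) (t := s.powerset)
    fun t _ => mem_powerset.mpr inter_subset_left]
  refine sum_le_sum fun h _ => ?_
  rw [sum_congr rfl fun t ht => by rw [(mem_filter.mp ht).2], sum_const, smul_eq_mul]
  refine Nat.mul_le_mul_right _ (card_le_card fun t ht => ?_)
  obtain ⟨htW, hst⟩ := mem_filter.mp ht
  exact mem_filter.mpr ⟨htW, hst ▸ inter_subset_right⟩

lemma sum_sq_card_filter_subset_le (hW : W ⊆ X.powersetCard m) (hml : 2 * m ≤ l)
    (hlX : l ≤ #X) :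
    ∑ T ∈ X.powersetCard l, #(W.filter (· ⊆ T)) ^ 2 ≤
      ∑ s ∈ W, ∑ h ∈ s.powerset,
        #(W.filter (h ⊆ ·)) * (#X - 2 * m + #h).choose (l - 2 * m + #h) := by
  rw [sum_sq_card_filter_subset hW hml]
  refine sum_le_sum fun s hs => ?_
  refine le_of_eq_of_le (sum_congr rfl fun t ht => ?_)
    (sum_le_sum_powerset_mul_card_filter_subset s fun j => (#X - 2 * m + j).choose (l - 2 * m + j))
  obtain ⟨hsX, hsm⟩ := mem_powersetCard.mp (hW hs)
  obtain ⟨htX, htm⟩ := mem_powersetCard.mp (hW ht)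
  have hunion := card_union_add_card_inter s t
  have hXs : #(s ∪ t) ≤ #X := card_le_card (union_subset hsX htX)
  congr 1 <;> omega

lemma sq_sum_card_filter_subset_le :
    (∑ T ∈ X.powersetCard l, #(W.filter (· ⊆ T))) ^ 2 ≤
      #((X.powersetCard l).filter (fun T => ∃ s ∈ W, s ⊆ T)) *
        ∑ T ∈ X.powersetCard l, #(W.filter (· ⊆ T)) ^ 2 := by
  rw [← sum_filter_of_ne (p := fun T => ∃ s ∈ W, s ⊆ T) fun T _ hT => by
    obtain ⟨s, hs⟩ := card_ne_zero.mp hT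
    exact ⟨s, (mem_filter.mp hs).1, (mem_filter.mp hs).2⟩]
  exact sq_sum_le_card_mul_sum_sq.trans
    (Nat.mul_le_mul_left _ (sum_le_sum_of_subset (filter_subset _ _)))

lemma sum_sq_card_filter_subset_le_of_spread (hW : W ⊆ X.powersetCard m) (hml : 2 * m ≤ l)
    (hlX : l ≤ #X) {r : ℝ} (hr : 0 < r)
    (hspread : ∀ h ⊆ X, #(W.filter (h ⊆ ·)) * r ^ #h ≤ #W) :
    ((∑ T ∈ X.powersetCard l, #(W.filter (· ⊆ T)) ^ 2 : ℕ) : ℝ) ≤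
      #W ^ 2 * ∑ j ∈ range (m + 1),
        m.choose j * (#X - 2 * m + j).choose (l - 2 * m + j) * r⁻¹ ^ j := by
  refine (Nat.cast_le.mpr (sum_sq_card_filter_subset_le hW hml hlX)).trans ?_
  push_cast
  rw [sq, mul_assoc, ← nsmul_eq_mul, ← sum_const]
  refine sum_le_sum fun s hs => ?_
  have hsm : #s = m := (mem_powersetCard.mp (hW hs)).2
  calc ∑ h ∈ s.powerset, (#(W.filter (h ⊆ ·)) : ℝ) * (#X - 2 * m + #h).choose (l - 2 * m + #h)
      ≤ ∑ h ∈ s.powerset, #W * r⁻¹ ^ #h * ((#X - 2 * m + #h).choose (l - 2 * m + #h) : ℝ) := by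
        refine sum_le_sum fun h hh => mul_le_mul_of_nonneg_right ?_ (Nat.cast_nonneg _)
        rw [inv_pow, ← div_eq_mul_inv, le_div_iff₀ (by positivity)]
        exact hspread h ((mem_powerset.mp hh).trans (mem_powersetCard.mp (hW hs)).1)
    _ = #W * ∑ j ∈ range (m + 1),
          m.choose j * (#X - 2 * m + j).choose (l - 2 * m + j) * r⁻¹ ^ j := by
        rw [sum_powerset_apply_card (fun j => (#W : ℝ) * r⁻¹ ^ j *
          ((#X - 2 * m + j).choose (l - 2 * m + j) : ℝ)), hsm, mul_sum]
        refine sum_congr rfl fun j _ => ?_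
        rw [nsmul_eq_mul]
        ring

lemma choose_le_mul_card_filter_exists_subset_of_spread (hW : W ⊆ X.powersetCard m)
    (hWne : W.Nonempty) (hml : m ^ 2 < l) (hlX : l ≤ #X) (hX : 100 * m ^ 2 ≤ #X) {r : ℝ}
    (hr : 0 < r) (hmr : (m : ℝ) * (#X - m) ≤ r * l)
    (hspread : ∀ h ⊆ X, #(W.filter (h ⊆ ·)) * r ^ #h ≤ #W) :
    ((#X).choose l : ℝ) ≤ 64 * #((X.powersetCard l).filter (fun T => ∃ s ∈ W, s ⊆ T)) := by
  have h2ml : 2 * m ≤ l := by nlinarith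
  have hCS := sq_sum_card_filter_subset_le (X := X) (W := W) (l := l)
  rw [sum_card_filter_subset hW (by omega : m ≤ l)] at hCS
  set S₂ := ∑ T ∈ X.powersetCard l, #(W.filter (· ⊆ T)) ^ 2
  set supp := (X.powersetCard l).filter (fun T => ∃ s ∈ W, s ⊆ T)
  have hA : 0 < (#X - m).choose (l - m) := Nat.choose_pos (by omega)
  have hS₂ : 0 < S₂ := by
    refine Nat.pos_of_ne_zero fun h => ?_
    rw [h, mul_zero] at hCS
    exact (pow_pos (Nat.mul_pos (card_pos.mpr hWne) hA) 2).ne' (Nat.le_zero.mp hCS)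
  have hCSR : ((#W * (#X - m).choose (l - m) : ℕ) : ℝ) ^ 2 ≤ #supp * S₂ := by
    exact_mod_cast hCS
  refine le_of_mul_le_mul_right ?_ (Nat.cast_pos.mpr hS₂)
  calc ((#X).choose l : ℝ) * S₂
      ≤ (#X).choose l * (#W ^ 2 * ∑ j ∈ range (m + 1),
          m.choose j * (#X - 2 * m + j).choose (l - 2 * m + j) * r⁻¹ ^ j) :=
        mul_le_mul_of_nonneg_left
          (sum_sq_card_filter_subset_le_of_spread hW h2ml hlX hr hspread) (Nat.cast_nonneg _)
    _ = #W ^ 2 * ((#X).choose l * ∑ j ∈ range (m + 1),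
          m.choose j * (#X - 2 * m + j).choose (l - 2 * m + j) * r⁻¹ ^ j) := by ring
    _ ≤ #W ^ 2 * (64 * ((#X - m).choose (l - m) : ℝ) ^ 2) :=
        mul_le_mul_of_nonneg_left (choose_mul_sum_le hmr hml hX) (by positivity)
    _ = 64 * ((#W * (#X - m).choose (l - m) : ℕ) : ℝ) ^ 2 := by push_cast; ring
    _ ≤ 64 * (#supp * S₂) := by gcongr
    _ = 64 * #supp * S₂ := by ring

variable {U : Finset (Finset α)} {g : Finset α}

def link (U : Finset (Finset α)) (g : Finset α) : Finset (Finset α) :=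
  (U.filter (g ⊆ ·)).image (· \ g)

lemma card_link : #(link U g) = #(U.filter (g ⊆ ·)) :=
  card_image_of_injOn fun s hs t ht hst => by
    rw [← sdiff_union_of_subset (mem_filter.mp hs).2, ← sdiff_union_of_subset (mem_filter.mp ht).2]
    exact congrArg (· ∪ g) hst

lemma link_subset_powersetCard (hU : U ⊆ X.powersetCard m) :
    link U g ⊆ (X \ g).powersetCard (m - #g) := by
  intro s' hs'
  obtain ⟨s, hs, rfl⟩ := mem_image.mp hs'
  obtain ⟨hsU, hgs⟩ := mem_filter.mp hs
  obtain ⟨hsX, hsm⟩ := mem_powersetCard.mp (hU hsU)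
  exact mem_powersetCard.mpr ⟨sdiff_subset_sdiff hsX le_rfl, by rw [card_sdiff_of_subset hgs, hsm]⟩

lemma card_filter_link {h : Finset α} (hgh : Disjoint g h) :
    #((link U g).filter (h ⊆ ·)) = #(U.filter (g ∪ h ⊆ ·)) := by
  have : (link U g).filter (h ⊆ ·) = link (U.filter (g ∪ h ⊆ ·)) g := by
    ext t
    simp only [link, mem_filter, mem_image, union_subset_iff]
    constructor
    · rintro ⟨⟨s, ⟨hsU, hgs⟩, rfl⟩, hhs⟩
      exact ⟨s, ⟨⟨hsU, hgs, hhs.trans sdiff_subset⟩, hgs⟩, rfl⟩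
    · rintro ⟨s, ⟨⟨hsU, hgs, hhs⟩, -⟩, rfl⟩
      exact ⟨⟨s, ⟨hsU, hgs⟩, rfl⟩, subset_sdiff.mpr ⟨hhs, hgh.symm⟩⟩
  rw [this, card_link, filter_filter]
  simp only [union_subset_iff, and_iff_left_of_imp And.left]

lemma card_filter_exists_subset_link_le (hg : g ⊆ X) (hgl : #g ≤ l) :
    #(((X \ g).powersetCard (l - #g)).filter (fun T => ∃ s ∈ link U g, s ⊆ T)) ≤
      #((X.powersetCard l).filter (fun T => ∃ s ∈ U.filter (g ⊆ ·), s ⊆ T)) := by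
  refine card_le_card_of_injOn (· ∪ g) (fun T hT => ?_) (fun T hT T' hT' hTT' => ?_)
  · obtain ⟨hTX, ⟨s', hs', hs'T⟩⟩ := mem_filter.mp hT
    obtain ⟨hTXg, hTl⟩ := mem_powersetCard.mp hTX
    obtain ⟨s, hs, rfl⟩ := mem_image.mp hs'
    rw [mem_coe, mem_filter, mem_powersetCard]
    refine ⟨⟨union_subset (hTXg.trans sdiff_subset) hg, ?_⟩, s, hs, ?_⟩
    · rw [card_union_of_disjoint (disjoint_of_subset_left hTXg sdiff_disjoint), hTl]
      omega
    · rw [← sdiff_union_of_subset (mem_filter.mp hs).2]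
      exact union_subset_union_left hs'T
  · have hd : ∀ T ∈ (X \ g).powersetCard (l - #g), Disjoint T g := fun T hT =>
      disjoint_of_subset_left (mem_powersetCard.mp hT).1 sdiff_disjoint
    rw [← union_sdiff_cancel_right (hd T (mem_filter.mp hT).1),
      ← union_sdiff_cancel_right (hd T' (mem_filter.mp hT').1)]
    exact congrArg (· \ g) hTT'

lemma exists_le_mul_pow_and_spread_link (U : Finset (Finset α)) (X : Finset α) {r : ℝ}
    (hr : 0 < r) :
    ∃ g ⊆ X, (#U : ℝ) ≤ #(U.filter (g ⊆ ·)) * r ^ #g ∧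
      ∀ h ⊆ X \ g, (#((link U g).filter (h ⊆ ·)) : ℝ) * r ^ #h ≤ #(link U g) := by
  obtain ⟨g, hgX, hmax⟩ := exists_max_image X.powerset
    (fun g => (#(U.filter (g ⊆ ·)) : ℝ) * r ^ #g) ⟨∅, empty_mem_powerset X⟩
  refine ⟨g, mem_powerset.mp hgX, by simpa using hmax ∅ (empty_mem_powerset X), fun h hh => ?_⟩
  have hgh : Disjoint g h := disjoint_of_subset_right hh disjoint_sdiff
  have := hmax (g ∪ h)
    (mem_powerset.mpr (union_subset (mem_powerset.mp hgX) (hh.trans sdiff_subset)))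
  rw [card_union_of_disjoint hgh, pow_add, ← mul_assoc, mul_right_comm] at this
  rw [card_filter_link hgh, card_link]
  exact le_of_mul_le_mul_right this (by positivity)

lemma card_mul_pow_le_choose (hU : U ⊆ X.powersetCard m) (hg : g ⊆ X) (hgm : #g ≤ m)
    (hm : 0 < m) (hmX : m < #X) (hl : 0 < l)
    (hUg : (#U : ℝ) ≤ #(U.filter (g ⊆ ·)) * ((m : ℝ) * (#X - m) / l) ^ #g) :
    (#U : ℝ) * (l / m ^ 2) ^ #g ≤ (#X).choose m := by
  have hXm : (0 : ℝ) < #X - m := by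
    have : (m : ℝ) < #X := by exact_mod_cast hmX
    linarith
  have hlink : (#(U.filter (g ⊆ ·)) : ℝ) ≤ (#X - #g).choose (m - #g) := by
    rw [← card_link, ← card_sdiff_of_subset hg, ← card_powersetCard]
    exact_mod_cast card_le_card (link_subset_powersetCard hU)
  calc (#U : ℝ) * (l / m ^ 2) ^ #g
      ≤ #(U.filter (g ⊆ ·)) * ((m : ℝ) * (#X - m) / l) ^ #g * (l / m ^ 2) ^ #g := by gcongr
    _ = #(U.filter (g ⊆ ·)) * (((#X : ℝ) - m) / m) ^ #g := by
        rw [mul_assoc, ← mul_pow]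
        congr 2
        field_simp
    _ ≤ ((m : ℝ) / (#X - m)) ^ #g * (#X).choose m * (((#X : ℝ) - m) / m) ^ #g := by
        gcongr
        exact hlink.trans (choose_sub_le_pow_mul_choose hmX hgm)
    _ = (#X).choose m := by
        rw [mul_right_comm, ← mul_pow, div_mul_div_cancel₀', div_self hXm.ne', one_pow, one_mul]
        positivity

lemma choose_sub_le_mul_card_filter_exists_subset (hU : U ⊆ X.powersetCard m) (hg : g ⊆ X)
    (hgm : #g ≤ m) (hm : 0 < m) (hUg : (U.filter (g ⊆ ·)).Nonempty) (hml : m ^ 2 < l) (hlX : l ≤ #X)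
    (hX : 100 * m ^ 2 ≤ #X)
    (hspread : ∀ h ⊆ X \ g,
      (#((link U g).filter (h ⊆ ·)) : ℝ) * ((m : ℝ) * (#X - m) / l) ^ #h ≤ #(link U g)) :
    ((#X - #g).choose (l - #g) : ℝ) ≤
      64 * #((X.powersetCard l).filter (fun T => ∃ s ∈ U.filter (g ⊆ ·), s ⊆ T)) := by
  -- The link has parameters `m - k`, `l - k` in `X \ g`; the hypotheses survive because
  -- `(m - k)² + k ≤ m²` and `(m - k) / (l - k) ≤ m / l`.
  obtain ⟨j, rfl⟩ := Nat.exists_eq_add_of_le hgm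
  set k := #g
  have hsq : j ^ 2 + k ≤ (k + j) ^ 2 := by nlinarith [Nat.le_mul_self k]
  have hml' : k + j ≤ l := by nlinarith
  have hmX : k + j < #X := by nlinarith
  have hXg : #(X \ g) = #X - k := card_sdiff_of_subset hg
  have hl : (0 : ℝ) < l := by exact_mod_cast (by omega : 0 < l)
  have hr : (0 : ℝ) < (k + j : ℕ) * (#X - (k + j : ℕ)) / l := by
    have : ((k + j : ℕ) : ℝ) < #X := by exact_mod_cast hmX
    exact div_pos (mul_pos (by exact_mod_cast hm) (by linarith)) hl
  have hspread' := choose_le_mul_card_filter_exists_subset_of_spread (m := k + j - k) (l := l - k)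
    (link_subset_powersetCard hU) (card_pos.mp (by rw [card_link]; exact card_pos.mpr hUg))
    ?_ ?_ ?_ hr ?_ hspread
  · rw [hXg] at hspread'
    refine hspread'.trans (mul_le_mul_of_nonneg_left ?_ (by norm_num))
    exact_mod_cast card_filter_exists_subset_link_le hg (by omega)
  · rw [Nat.add_sub_cancel_left]; omega
  · rw [hXg]; omega
  · rw [hXg, Nat.add_sub_cancel_left]; omega
  · rw [hXg, Nat.add_sub_cancel_left, Nat.cast_sub (by omega), Nat.cast_sub (by omega),
      div_mul_eq_mul_div, le_div_iff₀ hl]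
    have hml'' : ((k + j : ℕ) : ℝ) ≤ l := by exact_mod_cast hml'
    have hmX' : ((k + j : ℕ) : ℝ) < #X := by exact_mod_cast hmX
    push_cast at hml'' hmX' ⊢
    nlinarith [mul_nonneg (mul_nonneg k.cast_nonneg (sub_nonneg.mpr hml''))
      (sub_nonneg.mpr hmX'.le)]

lemma exists_extension_generator (hU : U ⊆ X.powersetCard m) (hUne : U.Nonempty) (hm : 0 < m)
    (hml : m ^ 2 < l) (hlX : l ≤ #X) (hX : 100 * m ^ 2 ≤ #X) :
    ∃ g ⊆ X, (#U : ℝ) * (l / m ^ 2) ^ #g ≤ (#X).choose m ∧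
      ((#X - #g).choose (l - #g) : ℝ) ≤
        64 * #((X.powersetCard l).filter (fun T => ∃ s ∈ U.filter (g ⊆ ·), s ⊆ T)) := by
  have hmX : m < #X := by nlinarith
  have hr : (0 : ℝ) < m * (#X - m) / l := by
    have : (m : ℝ) < #X := by exact_mod_cast hmX
    exact div_pos (mul_pos (by exact_mod_cast hm) (by linarith))
      (by exact_mod_cast (by omega : 0 < l))
  obtain ⟨g, hgX, hUg, hspread⟩ := exists_le_mul_pow_and_spread_link U X hr
  have hUg_ne : (U.filter (g ⊆ ·)).Nonempty := by
    by_contra h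
    simp [not_nonempty_iff_eq_empty.mp h, hUne.ne_empty] at hUg
  have hgm : #g ≤ m := by
    obtain ⟨s, hs⟩ := hUg_ne
    obtain ⟨hsU, hgs⟩ := mem_filter.mp hs
    exact (card_le_card hgs).trans (mem_powersetCard.mp (hU hsU)).2.le
  exact ⟨g, hgX, card_mul_pow_le_choose hU hgX hgm hm hmX (by omega) hUg,
    choose_sub_le_mul_card_filter_exists_subset hU hgX hgm hm hUg_ne hml hlX hX hspread⟩

end

lemma le_sparsity_div_log {n m l k : ℕ} {U : Finset (Finset ℕ)} (hU : U.Nonempty) (hm : 0 < m)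
    (hml : m ^ 2 < l) (h : (#U : ℝ) * (l / m ^ 2) ^ k ≤ n.choose m) :
    (k : ℝ) ≤ sparsity n m U / Real.log (l / m ^ 2) := by
  have hlm : (1 : ℝ) < l / m ^ 2 := by
    rw [one_lt_div (by positivity)]
    exact_mod_cast hml
  rw [le_div_iff₀ (Real.log_pos hlm), sparsity]
  have := Real.log_le_log (by positivity) h
  rw [Real.log_mul (by positivity) (by positivity), Real.log_pow] at this
  linarith

theorem stmt_14 :
    ∃ c : ℝ, 0 < c ∧ c < 1 ∧ ∃ ρ : ℝ, 0 < ρ ∧ ∃ n₀ : ℕ,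
      ∀ n : ℕ, n₀ ≤ n → ∀ m : ℕ, 1 ≤ m → (m : ℝ) ^ 2 ≤ c * n →
      ∀ l₀ : ℕ, m ^ 2 < l₀ → l₀ ≤ n →
      ∀ U : Finset (Finset ℕ), U.Nonempty → U ⊆ (Finset.Icc 1 n).powersetCard m →
      ∃ g : Finset ℕ, g ⊆ Finset.Icc 1 n ∧
        (g.card : ℝ) ≤ sparsity n m U / Real.log ((l₀ : ℝ) / (m : ℝ) ^ 2) ∧
        ((extFam n (U.filter (fun s => g ⊆ s)) l₀).card : ℝ) ≥
          ((n - g.card).choose (l₀ - g.card) : ℝ) * (1 - Real.exp (-ρ)) := by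
  refine ⟨1 / 100, by norm_num, by norm_num, Real.log (64 / 63), Real.log_pos (by norm_num), 0,
    fun n _ m hm hmn l₀ hml hln U hU hUX => ?_⟩
  -- `m ≥ 1` and `m² ≤ n / 100` already force `n ≥ 100`, so no `n₀` is needed.
  have hX : #(Icc 1 n) = n := by simp
  have h100 : 100 * m ^ 2 ≤ n := by exact_mod_cast (by linarith : (100 * m ^ 2 : ℝ) ≤ n)
  obtain ⟨g, hgX, hsparse, hext⟩ :=
    exists_extension_generator hUX hU hm hml (by rwa [hX]) (by rwa [hX])
  rw [hX] at hsparse hext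
  refine ⟨g, hgX, le_sparsity_div_log hU hm hml hsparse, ?_⟩
  rw [Real.exp_neg, Real.exp_log (by norm_num), extFam]
  linarith
end

section
/- Let n, r, L be natural numbers with 2 ≤ r ≤ n, set N₀ = C(n, 2) and R = C(r, 2), and suppose L ≤ N₀. Then the number of edge sets s ⊆ C([n], 2) with |s| = N₀ − L that contain all edges of some r-clique is at most C(n, r) · C(N₀, L) · e^{−L·R/N₀}. -/
/-!
Union bound over the `C(n, r)` vertex sets `v`. For a fixed `v`, taking complements in `C([n], 2)`
maps the edge sets of size `N₀ - L` containing the `R` edges of `v` injectively to the `L`-subsets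
of the remaining `N₀ - R` edges. Finally
`C(N₀ - R, L) / C(N₀, L) = ∏_{i < L} (N₀ - R - i) / (N₀ - i) ≤ (1 - R / N₀) ^ L ≤ e ^ (-L R / N₀)`.
-/

open Finset

theorem card_filter_exists_le_sum {α ι : Type*} [DecidableEq α] (S : Finset α) (V : Finset ι)
    (P : ι → α → Prop) [∀ v, DecidablePred (P v)] [DecidablePred fun s => ∃ v ∈ V, P v s] :
    #{s ∈ S | ∃ v ∈ V, P v s} ≤ ∑ v ∈ V, #{s ∈ S | P v s} := by
  refine (card_le_card fun s hs => ?_).trans card_biUnion_le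
  simp only [mem_filter, mem_biUnion] at hs ⊢
  obtain ⟨hsS, v, hv, hvs⟩ := hs
  exact ⟨v, hv, hsS, hvs⟩

theorem card_filter_superset_powersetCard_le {α : Type*} [DecidableEq α] (E T : Finset α) (k : ℕ) :
    #{s ∈ E.powersetCard k | T ⊆ s} ≤ (#(E \ T)).choose (#E - k) := by
  rw [← card_powersetCard]
  refine card_le_card_of_injOn (E \ ·) (fun s hs => ?_) (fun s hs t ht hst => ?_)
  · simp only [mem_coe, mem_filter, mem_powersetCard] at hs ⊢
    exact ⟨sdiff_subset_sdiff subset_rfl hs.2, by rw [card_sdiff_of_subset hs.1.1, hs.1.2]⟩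
  · simp only [mem_coe, mem_filter, mem_powersetCard] at hs ht
    rw [← Finset.sdiff_sdiff_eq_self hs.1.1, ← Finset.sdiff_sdiff_eq_self ht.1.1]
    exact congrArg (E \ ·) hst

theorem Nat.sub_sub_mul_le (m R i : ℕ) : (m - R - i) * m ≤ (m - i) * (m - R) := by
  rcases le_total (R + i) m with h | h
  · zify [h, (by omega : i ≤ m), (by omega : R ≤ m), (by omega : i ≤ m - R)]
    nlinarith
  · simp [(by omega : m - R - i = 0)]

theorem Nat.choose_sub_mul_pow_le_s19 (m R L : ℕ) :
    (m - R).choose L * m ^ L ≤ m.choose L * (m - R) ^ L := by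
  have hdesc : (m - R).descFactorial L * m ^ L ≤ m.descFactorial L * (m - R) ^ L := by
    simp only [descFactorial_eq_prod_range, pow_eq_prod_const, ← prod_mul_distrib]
    exact prod_le_prod' fun i _ => Nat.sub_sub_mul_le m R i
  rw [descFactorial_eq_factorial_mul_choose, descFactorial_eq_factorial_mul_choose,
    mul_assoc, mul_assoc] at hdesc
  exact Nat.le_of_mul_le_mul_left hdesc (factorial_pos L)

theorem Nat.choose_sub_le_choose_mul_exp (m R L : ℕ) (hR : R ≤ m) :
    ((m - R).choose L : ℝ) ≤ m.choose L * Real.exp (-(L * R / m)) := by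
  rcases m.eq_zero_or_pos with rfl | hm
  · simp [Nat.le_zero.mp hR]
  have hm' : (0 : ℝ) < m := by exact_mod_cast hm
  have hfactor : ((m - R : ℕ) : ℝ) ≤ m * Real.exp (-(R / m)) := by
    have h := Real.add_one_le_exp (-(R / m))
    calc ((m - R : ℕ) : ℝ) = m * (-(R / m) + 1) := by rw [Nat.cast_sub hR]; field_simp; ring
      _ ≤ m * Real.exp (-(R / m)) := by gcongr
  have hpow : ((m - R).choose L : ℝ) * (m : ℝ) ^ L ≤ m.choose L * ((m - R : ℕ) : ℝ) ^ L := by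
    exact_mod_cast Nat.choose_sub_mul_pow_le_s19 m R L
  refine le_of_mul_le_mul_right ?_ (pow_pos hm' L)
  calc ((m - R).choose L : ℝ) * (m : ℝ) ^ L ≤ m.choose L * ((m - R : ℕ) : ℝ) ^ L := hpow
    _ ≤ m.choose L * (m * Real.exp (-(R / m))) ^ L := by gcongr
    _ = m.choose L * Real.exp (-(L * R / m)) * (m : ℝ) ^ L := by
      rw [mul_pow, ← Real.exp_nat_mul]; ring_nf

open scoped Classical

theorem stmt_19_general (n r L : ℕ) (hrn : r ≤ n)
    (hL : L ≤ n.choose 2) :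
    (((((Finset.Icc 1 n).powersetCard 2).powersetCard (n.choose 2 - L)).filter
        (fun s => ∃ v ∈ (Finset.Icc 1 n).powersetCard r,
          v.powersetCard 2 ⊆ s)).card : ℝ) ≤
      (n.choose r : ℝ) * ((n.choose 2).choose L : ℝ) *
        Real.exp (-((L : ℝ) * (r.choose 2 : ℝ) / (n.choose 2 : ℝ))) := by
  have hIcc : #(Icc 1 n) = n := by simp
  have hclique : ∀ v ∈ (Icc 1 n).powersetCard r,
      #{s ∈ ((Icc 1 n).powersetCard 2).powersetCard (n.choose 2 - L) | v.powersetCard 2 ⊆ s} ≤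
        (n.choose 2 - r.choose 2).choose L := by
    intro v hv
    rw [mem_powersetCard] at hv
    have h := card_filter_superset_powersetCard_le ((Icc 1 n).powersetCard 2) (v.powersetCard 2)
      (n.choose 2 - L)
    rwa [card_sdiff_of_subset (powersetCard_mono (n := 2) hv.1), card_powersetCard,
      card_powersetCard, hv.2, hIcc, Nat.sub_sub_self hL] at h
  have hcount := (sum_le_sum hclique).trans_eq
    (by rw [sum_const, card_powersetCard, hIcc, smul_eq_mul])
  -- the filter in the statement is decided by `Classical.propDecidable`
  rw [filter_congr_decidable]
  refine (Nat.cast_le.mpr ((card_filter_exists_le_sum _ _ _).trans hcount)).trans ?_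
  push_cast
  rw [mul_assoc]
  gcongr
  exact Nat.choose_sub_le_choose_mul_exp _ _ _ (Nat.choose_le_choose 2 hrn)

theorem stmt_19 (n r L : ℕ) (hr2 : 2 ≤ r) (hrn : r ≤ n)
    (hL : L ≤ n.choose 2) :
    (((((Finset.Icc 1 n).powersetCard 2).powersetCard (n.choose 2 - L)).filter
        (fun s => ∃ v ∈ (Finset.Icc 1 n).powersetCard r,
          v.powersetCard 2 ⊆ s)).card : ℝ) ≤
      (n.choose r : ℝ) * ((n.choose 2).choose L : ℝ) *
        Real.exp (-((L : ℝ) * (r.choose 2 : ℝ) / (n.choose 2 : ℝ))) :=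
  stmt_19_general n r L hrn hL
end
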